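/- arXiv:2102.03892 — 7 statements merged into one kernel-verified Lean document; each statement's English description precedes it below -/
import Mathlib

section
/- For all integers 1 ≤ s ≤ D ≤ p, the probability that a hierarchical-uniform subspace S contains a fixed set S̄ of size s satisfies P(S ⊇ S̄) = D^{-1} Σ_{d=s}^{D} binom(p−s, d−s)/binom(p,d) = binom(D+1, s+1)/(D · binom(p,s)). In particular, for s = 1 (a single feature j), P(j ∈ S) = (D+1)/(2p). -/
/-!
Under the hierarchical-uniform law each size level `d ∈ [1, D]` carries mass `1/D`, spread evenly
over its `C(p, d)` sets, so these levels already exhaust the probability. Exactly `C(p - s, d - s)`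
sets of size `d` contain `S̄`, and `C(p - s, d - s) / C(p, d) = C(d, s) / C(p, s)`; the
hockey-stick identity `∑_{d ≤ D} C(d, s) = C(D + 1, s + 1)` then gives the closed form.
-/

open MeasureTheory

noncomputable section

instance (p : ℕ) : MeasurableSpace (Finset (Fin p)) := ⊤

open Finset

section HierarchicalUniform

def HasHierarchicalUniformLaw {p : ℕ} (D : ℕ) (ν : Measure (Finset (Fin p))) : Prop :=
  ∀ A : Finset (Fin p), 1 ≤ #A → #A ≤ D → ν {A} = ENNReal.ofReal (1 / (D * p.choose #A))

variable {p D : ℕ} {ν : Measure (Finset (Fin p))}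

lemma card_filter_superset_powersetCard_univ (S : Finset (Fin p)) {d : ℕ} (hd : #S ≤ d) :
    #((powersetCard d univ).filter (S ⊆ ·)) = (p - #S).choose (d - #S) := by
  rw [card_filter_powersetCard_subset S univ d (subset_univ S) hd, card_univ, Fintype.card_fin]

lemma measure_biUnion_of_subset_powersetCard (hν : HasHierarchicalUniformLaw D ν)
    {I : Finset ℕ} (hI : I ⊆ Icc 1 D) {F : ℕ → Finset (Finset (Fin p))}
    (hF : ∀ d ∈ I, F d ⊆ powersetCard d univ) :
    ν (⋃ d ∈ I, (F d : Set (Finset (Fin p))))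
      = ENNReal.ofReal (∑ d ∈ I, (#(F d) : ℝ) / (D * p.choose d)) := by
  rw [measure_biUnion_finset _ fun d _ => (F d).measurableSet,
    ENNReal.ofReal_sum_of_nonneg fun d _ => by positivity]
  · refine sum_congr rfl fun d hd => ?_
    have hdD := mem_Icc.1 (hI hd)
    calc ν (F d) = ∑ A ∈ F d, ν {A} := sum_measure_singleton.symm
      _ = ∑ A ∈ F d, ENNReal.ofReal (1 / (D * p.choose d)) := sum_congr rfl fun A hA => by
          obtain ⟨-, rfl⟩ := mem_powersetCard.1 (hF d hd hA)
          exact hν A hdD.1 hdD.2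
      _ = ENNReal.ofReal (#(F d) / (D * p.choose d)) := by
          rw [sum_const, nsmul_eq_mul, ← ENNReal.ofReal_natCast,
            ← ENNReal.ofReal_mul (Nat.cast_nonneg _), mul_one_div]
  · intro d hd e he hde
    refine Set.disjoint_left.2 fun A hAd hAe => hde ?_
    rw [← (mem_powersetCard.1 (hF d hd hAd)).2, ← (mem_powersetCard.1 (hF e he hAe)).2]

lemma measure_biUnion_powersetCard_eq_one (hν : HasHierarchicalUniformLaw D ν)
    (hD : 1 ≤ D) (hDp : D ≤ p) :
    ν (⋃ d ∈ Icc 1 D, ((powersetCard d univ : Finset (Finset (Fin p))) : Set (Finset (Fin p))))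
      = 1 := by
  rw [measure_biUnion_of_subset_powersetCard hν subset_rfl fun _ _ => subset_rfl]
  have hlevel : ∀ d ∈ Icc 1 D,
      (#(powersetCard d (univ : Finset (Fin p))) : ℝ) / (D * p.choose d) = 1 / D := fun d hd => by
    have hpd : (p.choose d : ℝ) ≠ 0 := by
      exact_mod_cast (Nat.choose_pos ((mem_Icc.1 hd).2.trans hDp)).ne'
    rw [card_powersetCard, card_univ, Fintype.card_fin]
    field_simp
  have hD0 : (D : ℝ) ≠ 0 := by exact_mod_cast (by omega : D ≠ 0)
  rw [sum_congr rfl hlevel, sum_const, Nat.card_Icc, Nat.add_sub_cancel, nsmul_eq_mul,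
    mul_one_div_cancel hD0, ENNReal.ofReal_one]

lemma measure_superset_eq [IsProbabilityMeasure ν] (hν : HasHierarchicalUniformLaw D ν)
    (hDp : D ≤ p) (S : Finset (Fin p)) (hS : 1 ≤ #S) (hSD : #S ≤ D) :
    ν {A | S ⊆ A} = ENNReal.ofReal
      (1 / D * ∑ d ∈ Icc #S D, ((p - #S).choose (d - #S) : ℝ) / p.choose d) := by
  set support :=
    ⋃ d ∈ Icc 1 D, ((powersetCard d univ : Finset (Finset (Fin p))) : Set (Finset (Fin p)))
  have hnull : ν supportᶜ = 0 := (prob_compl_eq_zero_iff .of_discrete).2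
    (measure_biUnion_powersetCard_eq_one hν (hS.trans hSD) hDp)
  have hsupersets : {A | S ⊆ A} ∩ support
      = ⋃ d ∈ Icc #S D, ((powersetCard d univ).filter (S ⊆ ·) : Set (Finset (Fin p))) := by
    ext A
    simp only [mem_Icc, Set.mem_inter_iff, Set.mem_ofPred_eq, Set.mem_iUnion, SetLike.mem_coe,
      mem_powersetCard, subset_univ, true_and, exists_prop, exists_eq_right', coe_filter,
      support]
    constructor
    · rintro ⟨hSA, -, hAD⟩
      exact ⟨#A, ⟨card_le_card hSA, hAD⟩, rfl, hSA⟩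
    · rintro ⟨_, ⟨hSd, hdD⟩, rfl, hSA⟩
      exact ⟨hSA, hS.trans hSd, hdD⟩
  rw [← measure_inter_conull hnull, hsupersets,
    measure_biUnion_of_subset_powersetCard hν (Icc_subset_Icc_left hS)
      fun _ _ => filter_subset _ _, mul_sum]
  refine congrArg ENNReal.ofReal (sum_congr rfl fun d hd => ?_)
  rw [card_filter_superset_powersetCard_univ S (mem_Icc.1 hd).1]
  ring

end HierarchicalUniform

lemma sum_choose_sub_div_choose {p D s : ℕ} (hDp : D ≤ p) :
    ∑ d ∈ Icc s D, ((p - s).choose (d - s) : ℝ) / p.choose d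
      = ((D + 1).choose (s + 1) : ℝ) / p.choose s := by
  have hterm : ∀ d ∈ Icc s D,
      ((p - s).choose (d - s) : ℝ) / p.choose d = (d.choose s : ℝ) / p.choose s := by
    intro d hd
    obtain ⟨hsd, hdD⟩ := mem_Icc.1 hd
    have hpd : (p.choose d : ℝ) ≠ 0 := by exact_mod_cast (Nat.choose_pos (hdD.trans hDp)).ne'
    have hps : (p.choose s : ℝ) ≠ 0 := by
      exact_mod_cast (Nat.choose_pos (hsd.trans (hdD.trans hDp))).ne'
    rw [div_eq_div_iff hpd hps]
    norm_cast
    rw [mul_comm, ← Nat.choose_mul hsd, mul_comm]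
  rw [sum_congr rfl hterm, ← sum_div, ← Nat.cast_sum, Nat.sum_Icc_choose]

/-- For `1 ≤ s ≤ D ≤ p`, the probability that a hierarchical-uniform subspace
contains a fixed set `S̄` of size `s` equals
`D⁻¹ Σ_{d=s}^{D} C(p−s, d−s)/C(p,d) = C(D+1, s+1)/(D·C(p,s))`; in particular, for `s = 1`
it equals `(D+1)/(2p)`. -/
theorem stmt_1 (p D s : ℕ) (hs : 1 ≤ s) (hsD : s ≤ D) (hDp : D ≤ p)
    (ν : Measure (Finset (Fin p))) [IsProbabilityMeasure ν]
    (hlaw : ∀ A : Finset (Fin p), 1 ≤ A.card → A.card ≤ D →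
      ν {A} = ENNReal.ofReal (1 / (D * (p.choose A.card))))
    (Sbar : Finset (Fin p)) (hcard : Sbar.card = s) :
    ν {A | Sbar ⊆ A}
        = ENNReal.ofReal ((1 / (D : ℝ)) *
            ∑ d ∈ Finset.Icc s D, ((p - s).choose (d - s) : ℝ) / (p.choose d))
    ∧ (1 / (D : ℝ)) * ∑ d ∈ Finset.Icc s D, ((p - s).choose (d - s) : ℝ) / (p.choose d)
        = ((D + 1).choose (s + 1) : ℝ) / (D * (p.choose s))
    ∧ (s = 1 →
        (1 / (D : ℝ)) * ∑ d ∈ Finset.Icc s D, ((p - s).choose (d - s) : ℝ) / (p.choose d)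
          = (D + 1 : ℝ) / (2 * p)) := by
  have hclosed : (1 / (D : ℝ)) * ∑ d ∈ Icc s D, ((p - s).choose (d - s) : ℝ) / p.choose d
      = ((D + 1).choose (s + 1) : ℝ) / (D * p.choose s) := by
    rw [sum_choose_sub_div_choose hDp, one_div_mul_eq_div, div_div, mul_comm (p.choose s : ℝ)]
  refine ⟨?_, hclosed, fun hs1 => ?_⟩
  · subst hcard
    exact measure_superset_eq hlaw hDp Sbar hs hsD
  · subst hs1
    have hD : (D : ℝ) ≠ 0 := by exact_mod_cast (by omega : D ≠ 0)
    rw [hclosed, Nat.choose_one_right, Nat.cast_choose_two]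
    field_simp
    push_cast
    ring

end
end

section
/- Fix an integer s ≥ 1 and consider sequences of integers D = D(n) and p = p(n) with s ≤ D ≤ p, D → ∞, and D/p → 0 as n → ∞. Then for any set S̄ of size s, the probability p_{S̄} that a hierarchical-uniform subspace contains S̄ satisfies p_{S̄} ≍ (D/p)^s: there exist constants 0 < c ≤ C (depending only on s) such that c·(D/p)^s ≤ p_{S̄} ≤ C·(D/p)^s for all sufficiently large n. -/
open MeasureTheory Filter

noncomputable section

/-- `pHier p D s` is the probability that a hierarchical-uniform subspace of `{1,…,p}`
(with maximal size `D`) contains a fixed set of size `s`: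
`p_{S̄} = D⁻¹ Σ_{d=s}^{D} C(p−s, d−s)/C(p,d)`. -/
def pHier (p D s : ℕ) : ℝ :=
  (1 / (D : ℝ)) * ∑ d ∈ Finset.Icc s D, ((p - s).choose (d - s) : ℝ) / (p.choose d)

/-! Summing over the size `d` with the hockey-stick identity gives the closed form
`p_{S̄} = C(D+1, s+1) / (D · C(p, s))`; the bounds `(n/2)^k/k! ≤ C(n,k) ≤ n^k/k!` for `2k ≤ n + 2`
then show that numerator and denominator are of order `D^(s+1)` and `D · p^s`. -/

open Nat

theorem Nat.half_pow_div_factorial_le_choose {α : Type*} [Semifield α] [LinearOrder α]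
    [IsStrictOrderedRing α] {n k : ℕ} (h : 2 * k ≤ n + 2) :
    ((n : α) / 2) ^ k / k ! ≤ n.choose k := by
  refine le_trans ?_ (pow_le_choose k n)
  have hhalf : (n : α) / 2 ≤ ((n + 1 - k : ℕ) : α) := by
    rw [div_le_iff₀ two_pos]
    exact_mod_cast (by omega : n ≤ (n + 1 - k) * 2)
  gcongr

/-- Both sides are the probability that a uniform `d`-subset of `{1,…,p}` contains a fixed
`s`-set. -/
theorem choose_sub_div_choose_eq {p d s : ℕ} (hsd : s ≤ d) (hdp : d ≤ p) :
    ((p - s).choose (d - s) : ℝ) / p.choose d = (d.choose s : ℝ) / p.choose s := by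
  have hpd : (p.choose d : ℝ) ≠ 0 := mod_cast (choose_pos hdp).ne'
  have hps : (p.choose s : ℝ) ≠ 0 := mod_cast (choose_pos (hsd.trans hdp)).ne'
  rw [div_eq_div_iff hpd hps]
  exact_mod_cast by rw [mul_comm, ← choose_mul hsd, mul_comm]

theorem pHier_eq_choose_div {p D s : ℕ} (hDp : D ≤ p) :
    pHier p D s = ((D + 1).choose (s + 1) : ℝ) / (D * p.choose s) := by
  have hterm : ∀ d ∈ Finset.Icc s D, ((p - s).choose (d - s) : ℝ) / p.choose d
      = (d.choose s : ℝ) / p.choose s := fun d hd =>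
    choose_sub_div_choose_eq (Finset.mem_Icc.1 hd).1 ((Finset.mem_Icc.1 hd).2.trans hDp)
  have hhockey : ∑ d ∈ Finset.Icc s D, (d.choose s : ℝ) = (D + 1).choose (s + 1) := by
    exact_mod_cast sum_Icc_choose D s
  rw [pHier, Finset.sum_congr rfl hterm, ← Finset.sum_div, hhockey]
  field_simp

section Bounds

variable {p D s : ℕ} (hD : 0 < D) (h2s : 2 * s ≤ D) (hDp : D ≤ p)
include hD h2s hDp

theorem inv_mul_pow_le_pHier :
    (2 ^ (s + 1) * ((s : ℝ) + 1))⁻¹ * ((D : ℝ) / p) ^ s ≤ pHier p D s := by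
  have hp : (0 : ℝ) < p := mod_cast hD.trans_le hDp
  have hnum : ((D : ℝ) / 2) ^ (s + 1) / (s + 1)! ≤ (D + 1).choose (s + 1) := by
    refine le_trans ?_ (half_pow_div_factorial_le_choose (by omega))
    gcongr
    linarith
  have hden : (p.choose s : ℝ) ≤ (p : ℝ) ^ s / s ! := choose_le_pow_div s p
  calc (2 ^ (s + 1) * ((s : ℝ) + 1))⁻¹ * ((D : ℝ) / p) ^ s
      = ((D : ℝ) / 2) ^ (s + 1) / (s + 1)! / (D * ((p : ℝ) ^ s / s !)) := by
        rw [factorial_succ]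
        push_cast
        simp only [div_pow]
        field_simp
        ring
    _ ≤ ((D + 1).choose (s + 1) : ℝ) / (D * p.choose s) := by
        have : (0 : ℝ) < p.choose s := mod_cast choose_pos (by omega : s ≤ p)
        gcongr
    _ = pHier p D s := (pHier_eq_choose_div hDp).symm

theorem pHier_le_mul_pow :
    pHier p D s ≤ 2 ^ (2 * s + 1) / ((s : ℝ) + 1) * ((D : ℝ) / p) ^ s := by
  have hD' : (1 : ℝ) ≤ D := mod_cast hD
  have hp : (0 : ℝ) < p := by linarith [(Nat.cast_le (α := ℝ)).2 hDp]
  have hnum : ((D + 1).choose (s + 1) : ℝ) ≤ (2 * (D : ℝ)) ^ (s + 1) / (s + 1)! := by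
    refine (choose_le_pow_div (s + 1) (D + 1)).trans ?_
    gcongr
    push_cast
    linarith
  have hden : ((p : ℝ) / 2) ^ s / s ! ≤ p.choose s :=
    half_pow_div_factorial_le_choose (by omega)
  calc pHier p D s = ((D + 1).choose (s + 1) : ℝ) / (D * p.choose s) :=
        pHier_eq_choose_div hDp
    _ ≤ (2 * (D : ℝ)) ^ (s + 1) / (s + 1)! / (D * (((p : ℝ) / 2) ^ s / s !)) := by
        gcongr
    _ = 2 ^ (2 * s + 1) / ((s : ℝ) + 1) * ((D : ℝ) / p) ^ s := by
        rw [factorial_succ]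
        push_cast
        simp only [div_pow]
        field_simp
        ring

end Bounds

theorem stmt_2_general (s : ℕ) :
    ∃ c C : ℝ, 0 < c ∧ c ≤ C ∧
      ∀ (D p : ℕ → ℕ),
        (∀ n, s ≤ D n) → (∀ n, D n ≤ p n) →
        Tendsto D atTop atTop →
        Tendsto (fun n => (D n : ℝ) / (p n : ℝ)) atTop (nhds 0) →
        ∀ᶠ n in atTop,
          c * ((D n : ℝ) / (p n : ℝ)) ^ s ≤ pHier (p n) (D n) s
          ∧ pHier (p n) (D n) s ≤ C * ((D n : ℝ) / (p n : ℝ)) ^ s := by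
  refine ⟨(2 ^ (s + 1) * ((s : ℝ) + 1))⁻¹, 2 ^ (2 * s + 1) / ((s : ℝ) + 1), by positivity,
    ?_, fun D p _ hDp hD _ => ?_⟩
  · rw [mul_inv, div_eq_mul_inv]
    gcongr
    exact (inv_le_one_of_one_le₀ (one_le_pow₀ one_le_two)).trans (one_le_pow₀ one_le_two)
  · filter_upwards [hD.eventually_gt_atTop 0, hD.eventually_ge_atTop (2 * s)] with n hn h2s
    exact ⟨inv_mul_pow_le_pHier hn h2s (hDp n), pHier_le_mul_pow hn h2s (hDp n)⟩

/-- Fix `s ≥ 1`. For sequences `D = D(n)`, `p = p(n)` with `s ≤ D ≤ p`,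
`D → ∞` and `D/p → 0`, the containment probability `p_{S̄}` of any fixed size-`s` set
satisfies `p_{S̄} ≍ (D/p)^s`, with constants `0 < c ≤ C` depending only on `s`. -/
theorem stmt_2 (s : ℕ) (hs : 1 ≤ s) :
    ∃ c C : ℝ, 0 < c ∧ c ≤ C ∧
      ∀ (D p : ℕ → ℕ),
        (∀ n, s ≤ D n) → (∀ n, D n ≤ p n) →
        Tendsto D atTop atTop →
        Tendsto (fun n => (D n : ℝ) / (p n : ℝ)) atTop (nhds 0) →
        ∀ᶠ n in atTop,
          c * ((D n : ℝ) / (p n : ℝ)) ^ s ≤ pHier (p n) (D n) s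
          ∧ pHier (p n) (D n) s ≤ C * ((D n : ℝ) / (p n : ℝ)) ^ s :=
  stmt_2_general s

end
end

section
/- Let 1 ≤ D ≤ p, fix a set S̄ ⊆ {1,…,p} with 1 ≤ |S̄| ≤ D and suppose p_{S̄} ≤ 1/2. Let S^(−j) be a random subset with law P(S^(−j) = A) = [D · (1−p_{S̄}) · binom(p,|A|)]^{-1} for every A with 1 ≤ |A| ≤ D and S̄ ⊄ A (the hierarchical uniform distribution conditioned on not containing S̄). Then for any finite set A₀ ⊆ {1,…,p} and any integer t with 0 ≤ t ≤ min(|A₀|, D): P(|S^(−j) ∩ A₀| = t) ≤ 2 · binom(|A₀|, t) · (D/(p−D+1))^t, and consequently P(|S^(−j) ∩ A₀| ≥ t) ≤ Σ_{u=t}^{min(|A₀|,D)} 2 · binom(|A₀|, u) · (D/(p−D+1))^u. -/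
open MeasureTheory Filter

noncomputable section

/-! Conditioning the hierarchical uniform law on `S̄ ⊄ A` multiplies it by `1 / (1 - p_{S̄}) ≤ 2`
on its support, so it suffices to bound the unconditioned probability. A `d`-set meeting `A₀` in
exactly `t` points is a `t`-subset of `A₀` together with a `(d - t)`-subset of the rest, and
`C(p - t, d - t) / C(p, d)` is the ratio of falling factorials `d^(t) / p^(t)`, which is at most
`(D / (p - D + 1))^t`. Averaging over `d` gives the pointwise bound; the tail bound is a union
bound over `t ≤ u ≤ min(|A₀|, D)`, as the law lives on sets of size at most `D`. -/

open Finset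

theorem cast_sub_add_one_pos {D n : ℕ} (h : D ≤ n) : (0 : ℝ) < n - D + 1 := by
  have : (D : ℝ) ≤ n := by exact_mod_cast h
  linarith

namespace Nat

theorem choose_sub_mul_descFactorial {n d u : ℕ} (hud : u ≤ d) :
    (n - u).choose (d - u) * n.descFactorial u = n.choose d * d.descFactorial u := by
  rw [descFactorial_eq_factorial_mul_choose, descFactorial_eq_factorial_mul_choose,
    mul_left_comm (n.choose d), choose_mul hud]
  ring

theorem choose_sub_mul_pow_le {n d u D : ℕ} (hud : u ≤ d) (hdD : d ≤ D) (hDn : D ≤ n) :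
    (n - u).choose (d - u) * (n - D + 1) ^ u ≤ n.choose d * D ^ u :=
  calc (n - u).choose (d - u) * (n - D + 1) ^ u
      ≤ (n - u).choose (d - u) * n.descFactorial u := by
        gcongr
        exact (Nat.pow_le_pow_left (by omega) u).trans (pow_sub_le_descFactorial n u)
    _ = n.choose d * d.descFactorial u := choose_sub_mul_descFactorial hud
    _ ≤ n.choose d * D ^ u := by
        gcongr
        exact (descFactorial_le_pow d u).trans (Nat.pow_le_pow_left hdD u)

end Nat

namespace Finset
variable {α : Type*} [Fintype α] [DecidableEq α]

theorem card_filter_card_eq_and_subset (S : Finset α) {d : ℕ} (hSd : #S ≤ d) :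
    #{A : Finset α | #A = d ∧ S ⊆ A} = (Fintype.card α - #S).choose (d - #S) := by
  rw [← card_compl, ← card_powersetCard]
  refine card_nbij' (· \ S) (· ∪ S) ?_ ?_ ?_ ?_
  · intro A hA
    simp only [coe_filter, mem_univ, true_and, Set.mem_ofPred_eq] at hA
    rw [mem_coe, mem_powersetCard, card_sdiff_of_subset hA.2, hA.1]
    exact ⟨subset_compl_iff_disjoint_right.2 sdiff_disjoint, rfl⟩
  · intro B hB
    simp only [mem_coe, mem_powersetCard, subset_compl_iff_disjoint_right] at hB
    simp only [coe_filter, mem_univ, true_and, Set.mem_ofPred_eq, card_union_of_disjoint hB.1,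
      hB.2, subset_union_right, and_true]
    omega
  · intro A hA
    simp only [coe_filter, mem_univ, true_and, Set.mem_ofPred_eq] at hA
    exact sdiff_union_of_subset hA.2
  · intro B hB
    simp only [mem_coe, mem_powersetCard, subset_compl_iff_disjoint_right] at hB
    exact union_sdiff_cancel_right hB.1

theorem card_filter_card_eq_and_card_inter_eq_le (B : Finset α) (d u : ℕ) :
    #{A : Finset α | #A = d ∧ #(A ∩ B) = u}
      ≤ (#B).choose u * (Fintype.card α - #B).choose (d - u) := by
  rw [← card_compl, ← card_powersetCard, ← card_powersetCard, ← card_product]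
  refine card_le_card_of_injOn (fun A => (A ∩ B, A \ B)) ?_ ?_
  · intro A hA
    simp only [coe_filter, mem_univ, true_and, Set.mem_ofPred_eq] at hA
    have hsplit := card_inter_add_card_sdiff A B
    simp only [mem_coe, mem_product, mem_powersetCard]
    exact ⟨⟨inter_subset_right, hA.2⟩, subset_compl_iff_disjoint_right.2 sdiff_disjoint, by omega⟩
  · intro A _ A' _ h
    simp only [Prod.mk.injEq] at h
    rw [← sdiff_union_inter A B, ← sdiff_union_inter A' B, h.1, h.2]

theorem card_filter_card_eq_and_card_inter_eq_mul_pow_le (B : Finset α) (u : ℕ) {d D : ℕ}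
    (hdD : d ≤ D) (hDn : D ≤ Fintype.card α) :
    #{A : Finset α | #A = d ∧ #(A ∩ B) = u} * (Fintype.card α - D + 1) ^ u
      ≤ (#B).choose u * (Fintype.card α).choose d * D ^ u := by
  by_cases hu : u ≤ d ∧ u ≤ #B
  · calc #{A : Finset α | #A = d ∧ #(A ∩ B) = u} * (Fintype.card α - D + 1) ^ u
        ≤ (#B).choose u * (Fintype.card α - #B).choose (d - u) * (Fintype.card α - D + 1) ^ u := by
          gcongr
          exact card_filter_card_eq_and_card_inter_eq_le B d u
      _ ≤ (#B).choose u * ((Fintype.card α - u).choose (d - u) * (Fintype.card α - D + 1) ^ u) := by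
          rw [mul_assoc]
          exact Nat.mul_le_mul_left _ (Nat.mul_le_mul_right _ (Nat.choose_le_choose _ (by omega)))
      _ ≤ (#B).choose u * ((Fintype.card α).choose d * D ^ u) :=
          Nat.mul_le_mul_left _ (Nat.choose_sub_mul_pow_le hu.1 hdD hDn)
      _ = _ := by ring
  · rw [filter_false_of_mem fun A _ (hA : #A = d ∧ #(A ∩ B) = u) =>
      hu ⟨hA.2 ▸ hA.1 ▸ card_le_card inter_subset_left, hA.2 ▸ card_le_card inter_subset_right⟩]
    simp

end Finset

section HierarchicalUniform

variable {α : Type*} [Fintype α]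

def hierarchicalUniformProb (D : ℕ) (P : Finset α → Prop) [DecidablePred P] : ℝ :=
  1 / (D : ℝ) * ∑ d ∈ Icc 1 D,
    (#{A : Finset α | #A = d ∧ P A} : ℝ) / (Fintype.card α).choose d

namespace hierarchicalUniformProb

theorem div_eq_sum_filter (D : ℕ) (P : Finset α → Prop) [DecidablePred P] (c : ℝ) :
    hierarchicalUniformProb D P / c
      = ∑ A : Finset α with #A ∈ Icc 1 D ∧ P A, 1 / (D * c * (Fintype.card α).choose #A) := by
  rw [← sum_fiberwise_of_maps_to (g := card) (t := Icc 1 D) (fun A hA => (mem_filter.1 hA).2.1),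
    hierarchicalUniformProb, mul_div_assoc, sum_div, mul_sum]
  refine sum_congr rfl fun d hd => ?_
  have hfiber : (univ.filter fun A : Finset α => #A ∈ Icc 1 D ∧ P A).filter (#· = d)
      = ({A | #A = d ∧ P A} : Finset (Finset α)) := by
    ext A
    simp only [mem_filter, mem_univ, true_and]
    constructor
    · exact fun h => ⟨h.2, h.1.2⟩
    · rintro ⟨rfl, h⟩; exact ⟨⟨hd, h⟩, rfl⟩
  rw [hfiber, sum_congr rfl fun A hA => by rw [(mem_filter.1 hA).2.1], sum_const, nsmul_eq_mul]
  ring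

theorem add_not {D : ℕ} (hD : 1 ≤ D) (hDn : D ≤ Fintype.card α) (P : Finset α → Prop)
    [DecidablePred P] :
    hierarchicalUniformProb D P + hierarchicalUniformProb D (fun A => ¬ P A) = 1 := by
  have hfiber : ∀ d ∈ Icc 1 D, (#{A : Finset α | #A = d ∧ P A} : ℝ) / (Fintype.card α).choose d
      + (#{A : Finset α | #A = d ∧ ¬ P A} : ℝ) / (Fintype.card α).choose d = 1 := by
    intro d hd
    have hchoose : ((Fintype.card α).choose d : ℝ) ≠ 0 := by
      exact_mod_cast (Nat.choose_pos ((mem_Icc.1 hd).2.trans hDn)).ne'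
    rw [← add_div, div_eq_one_iff_eq hchoose, ← filter_filter, ← filter_filter,
      ← Nat.cast_add, card_filter_add_card_filter_not, univ_filter_card_eq, card_powersetCard,
      card_univ]
  rw [hierarchicalUniformProb, hierarchicalUniformProb, ← mul_add, ← sum_add_distrib,
    sum_congr rfl hfiber, sum_const, Nat.card_Icc, nsmul_eq_mul, Nat.add_sub_cancel]
  field_simp

theorem subset {D : ℕ} [DecidableEq α] (S : Finset α) (hS : 1 ≤ #S) :
    hierarchicalUniformProb D (S ⊆ ·) = 1 / (D : ℝ) * ∑ d ∈ Icc #S D,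
      ((Fintype.card α - #S).choose (d - #S) : ℝ) / (Fintype.card α).choose d := by
  rw [hierarchicalUniformProb, ← sum_subset (Icc_subset_Icc_left hS)]
  · refine congrArg _ (sum_congr rfl fun d hd => ?_)
    rw [card_filter_card_eq_and_subset S (mem_Icc.1 hd).1]
  · intro d _ hd
    have hdS : d < #S := by simp_all
    rw [filter_false_of_mem fun A _ (hA : #A = d ∧ S ⊆ A) => hdS.not_ge (hA.1 ▸ card_le_card hA.2)]
    simp

theorem mono {D : ℕ} {P Q : Finset α → Prop} [DecidablePred P] [DecidablePred Q]
    (h : ∀ A, P A → Q A) : hierarchicalUniformProb D P ≤ hierarchicalUniformProb D Q := by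
  unfold hierarchicalUniformProb
  gcongr with _ _ A
  exact h A

theorem card_inter_eq_le [DecidableEq α] {D : ℕ} (hDn : D ≤ Fintype.card α) (B : Finset α)
    (u : ℕ) :
    hierarchicalUniformProb D (fun A => #(A ∩ B) = u)
      ≤ (#B).choose u * ((D : ℝ) / (Fintype.card α - D + 1)) ^ u := by
  set b : ℝ := (#B).choose u * ((D : ℝ) / (Fintype.card α - D + 1)) ^ u
  have hgap := cast_sub_add_one_pos hDn
  have hfiber : ∀ d ∈ Icc 1 D, (#{A : Finset α | #A = d ∧ #(A ∩ B) = u} : ℝ)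
      / (Fintype.card α).choose d ≤ b := by
    intro d hd
    have hdD := (mem_Icc.1 hd).2
    have hchoose : (0 : ℝ) < (Fintype.card α).choose d := by
      exact_mod_cast Nat.choose_pos (hdD.trans hDn)
    have hreal : (#{A : Finset α | #A = d ∧ #(A ∩ B) = u} : ℝ) * (Fintype.card α - D + 1) ^ u
        ≤ (#B).choose u * (Fintype.card α).choose d * D ^ u := by
      exact_mod_cast card_filter_card_eq_and_card_inter_eq_mul_pow_le B u hdD hDn
    have hb : b * (Fintype.card α).choose d
        = (#B).choose u * (Fintype.card α).choose d * D ^ u / (Fintype.card α - D + 1) ^ u := by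
      simp only [b, div_pow]
      ring
    rw [div_le_iff₀ hchoose, hb, le_div_iff₀ (pow_pos hgap u)]
    exact hreal
  calc hierarchicalUniformProb D (fun A => #(A ∩ B) = u)
      ≤ 1 / (D : ℝ) * ∑ _d ∈ Icc 1 D, b := by
        unfold hierarchicalUniformProb
        gcongr with d hd
        exact hfiber d hd
    _ ≤ b := by
        rw [sum_const, Nat.card_Icc, Nat.add_sub_cancel, nsmul_eq_mul]
        rcases eq_or_ne D 0 with rfl | hD
        · simp only [Nat.cast_zero, div_zero, zero_mul]
          positivity
        · rw [one_div, inv_mul_cancel_left₀ (Nat.cast_ne_zero.2 hD)]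

end hierarchicalUniformProb

end HierarchicalUniform

namespace MeasureTheory

variable {α : Type*} [MeasurableSpace α] [MeasurableSingletonClass α] {ν : Measure α}
  [IsProbabilityMeasure ν] {G : Finset α} {w : α → ℝ}

theorem measure_compl_eq_zero_of_sum_eq_one (hw : ∀ x ∈ G, 0 ≤ w x)
    (hν : ∀ x ∈ G, ν {x} = ENNReal.ofReal (w x)) (hsum : ∑ x ∈ G, w x = 1) :
    ν (↑G)ᶜ = 0 := by
  rw [prob_compl_eq_zero_iff G.measurableSet, ← sum_measure_singleton, sum_congr rfl hν,
    ← ENNReal.ofReal_sum_of_nonneg hw, hsum, ENNReal.ofReal_one]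

theorem measure_setOf_eq_ofReal_sum (hw : ∀ x ∈ G, 0 ≤ w x)
    (hν : ∀ x ∈ G, ν {x} = ENNReal.ofReal (w x)) (hsum : ∑ x ∈ G, w x = 1)
    (P : α → Prop) [DecidablePred P] :
    ν {x | P x} = ENNReal.ofReal (∑ x ∈ G with P x, w x) := by
  rw [← measure_inter_conull (measure_compl_eq_zero_of_sum_eq_one hw hν hsum),
    ENNReal.ofReal_sum_of_nonneg fun x hx => hw x (mem_filter.1 hx).1,
    sum_congr rfl fun x hx => (hν x (mem_filter.1 hx).1).symm, sum_measure_singleton,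
    coe_filter]
  congr 1
  ext x
  exact and_comm

end MeasureTheory

section ConditionalLaw

variable {α : Type*} [Fintype α] [DecidableEq α] {D : ℕ} {S : Finset α}

variable (D S) in
def avoidingSupport : Finset (Finset α) := {A | #A ∈ Icc 1 D ∧ ¬ S ⊆ A}

theorem sum_filter_avoidingSupport (c : ℝ) (P : Finset α → Prop) [DecidablePred P] :
    ∑ A ∈ avoidingSupport D S with P A, 1 / (D * c * (Fintype.card α).choose #A)
      = hierarchicalUniformProb D (fun A => ¬ S ⊆ A ∧ P A) / c := by
  rw [avoidingSupport, hierarchicalUniformProb.div_eq_sum_filter, filter_filter]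
  simp only [and_assoc]

theorem sum_avoidingSupport_eq_one (hD : 1 ≤ D) (hDn : D ≤ Fintype.card α)
    (hS : hierarchicalUniformProb D (S ⊆ ·) < 1) :
    ∑ A ∈ avoidingSupport D S,
        1 / (D * (1 - hierarchicalUniformProb D (S ⊆ ·)) * (Fintype.card α).choose #A) = 1 := by
  have h := sum_filter_avoidingSupport (D := D) (S := S) (1 - hierarchicalUniformProb D (S ⊆ ·))
    (fun _ => True)
  simp only [filter_true, and_true] at h
  rw [h, eq_sub_of_add_eq' (hierarchicalUniformProb.add_not hD hDn (S ⊆ ·)),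
    div_self (sub_pos.2 hS).ne']

variable [MeasurableSpace (Finset α)] [MeasurableSingletonClass (Finset α)]
  {ν : Measure (Finset α)} [IsProbabilityMeasure ν]

theorem ae_mem_avoidingSupport (hD : 1 ≤ D) (hDn : D ≤ Fintype.card α)
    (hS : hierarchicalUniformProb D (S ⊆ ·) < 1)
    (hlaw : ∀ A ∈ avoidingSupport D S, ν {A} = ENNReal.ofReal
      (1 / (D * (1 - hierarchicalUniformProb D (S ⊆ ·)) * (Fintype.card α).choose #A))) :
    ∀ᵐ A ∂ν, A ∈ avoidingSupport D S :=
  have := sub_pos.2 hS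
  mem_ae_iff.2 (measure_compl_eq_zero_of_sum_eq_one (fun A _ => by positivity) hlaw
    (sum_avoidingSupport_eq_one hD hDn hS))

theorem measure_setOf_eq_of_law (hD : 1 ≤ D) (hDn : D ≤ Fintype.card α)
    (hS : hierarchicalUniformProb D (S ⊆ ·) < 1)
    (hlaw : ∀ A ∈ avoidingSupport D S, ν {A} = ENNReal.ofReal
      (1 / (D * (1 - hierarchicalUniformProb D (S ⊆ ·)) * (Fintype.card α).choose #A)))
    (P : Finset α → Prop) [DecidablePred P] :
    ν {A | P A} = ENNReal.ofReal (hierarchicalUniformProb D (fun A => ¬ S ⊆ A ∧ P A)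
      / (1 - hierarchicalUniformProb D (S ⊆ ·))) := by
  have := sub_pos.2 hS
  rw [measure_setOf_eq_ofReal_sum (fun A _ => by positivity) hlaw
    (sum_avoidingSupport_eq_one hD hDn hS), sum_filter_avoidingSupport]

theorem measure_card_inter_eq_le_of_law (hD : 1 ≤ D) (hDn : D ≤ Fintype.card α)
    (hS : hierarchicalUniformProb D (S ⊆ ·) ≤ 1 / 2)
    (hlaw : ∀ A ∈ avoidingSupport D S, ν {A} = ENNReal.ofReal
      (1 / (D * (1 - hierarchicalUniformProb D (S ⊆ ·)) * (Fintype.card α).choose #A)))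
    (B : Finset α) (u : ℕ) :
    ν {A | #(A ∩ B) = u}
      ≤ ENNReal.ofReal (2 * (#B).choose u * ((D : ℝ) / (Fintype.card α - D + 1)) ^ u) := by
  have hq : 0 < 1 - hierarchicalUniformProb D (S ⊆ ·) := by linarith
  rw [measure_setOf_eq_of_law hD hDn (by linarith) hlaw]
  refine ENNReal.ofReal_le_ofReal ((div_le_iff₀ hq).2 ?_)
  have hbound := (hierarchicalUniformProb.mono fun A (h : ¬ S ⊆ A ∧ _) => h.2).trans
    (hierarchicalUniformProb.card_inter_eq_le hDn B u)
  have hgap := cast_sub_add_one_pos hDn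
  have : 0 ≤ ((#B).choose u : ℝ) * ((D : ℝ) / (Fintype.card α - D + 1)) ^ u := by positivity
  nlinarith

theorem measure_le_card_inter_le_of_law (hD : 1 ≤ D) (hDn : D ≤ Fintype.card α)
    (hS : hierarchicalUniformProb D (S ⊆ ·) ≤ 1 / 2)
    (hlaw : ∀ A ∈ avoidingSupport D S, ν {A} = ENNReal.ofReal
      (1 / (D * (1 - hierarchicalUniformProb D (S ⊆ ·)) * (Fintype.card α).choose #A)))
    (B : Finset α) (t : ℕ) :
    ν {A | t ≤ #(A ∩ B)} ≤ ENNReal.ofReal (∑ u ∈ Icc t (min #B D),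
      2 * (#B).choose u * ((D : ℝ) / (Fintype.card α - D + 1)) ^ u) := by
  have hgap := cast_sub_add_one_pos hDn
  calc ν {A | t ≤ #(A ∩ B)}
      ≤ ν (⋃ u ∈ Icc t (min #B D), {A | #(A ∩ B) = u}) := by
        refine measure_mono_ae ((ae_mem_avoidingSupport hD hDn (by linarith) hlaw).mono
          fun A hA (hAt : t ≤ #(A ∩ B)) => ?_)
        have hAD := (mem_Icc.1 (mem_filter.1 hA).2.1).2
        exact Set.mem_biUnion (mem_Icc.2 ⟨hAt, le_min (card_le_card inter_subset_right)
          ((card_le_card inter_subset_left).trans hAD)⟩) rfl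
    _ ≤ ∑ u ∈ Icc t (min #B D), ν {A | #(A ∩ B) = u} := measure_biUnion_finset_le _ _
    _ ≤ _ := by
      rw [ENNReal.ofReal_sum_of_nonneg fun u _ => by positivity]
      exact sum_le_sum fun u _ => measure_card_inter_eq_le_of_law hD hDn hS hlaw B u

end ConditionalLaw

theorem stmt_3_general (p D : ℕ) (hD : 1 ≤ D) (hDp : D ≤ p)
    (Sbar : Finset (Fin p)) (hSbar1 : 1 ≤ Sbar.card)
    (pj : ℝ)
    (hpj : pj = (1 / (D : ℝ)) *
      ∑ d ∈ Finset.Icc Sbar.card D,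
        ((p - Sbar.card).choose (d - Sbar.card) : ℝ) / (p.choose d))
    (hpjhalf : pj ≤ 1 / 2)
    (ν : Measure (Finset (Fin p))) [IsProbabilityMeasure ν]
    (hlaw : ∀ A : Finset (Fin p), 1 ≤ A.card → A.card ≤ D → ¬ Sbar ⊆ A →
      ν {A} = ENNReal.ofReal (1 / (D * (1 - pj) * (p.choose A.card))))
    (A₀ : Finset (Fin p)) (t : ℕ) :
    ν {A | (A ∩ A₀).card = t}
        ≤ ENNReal.ofReal (2 * (A₀.card.choose t : ℝ) * ((D : ℝ) / ((p : ℝ) - D + 1)) ^ t)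
    ∧ ν {A | t ≤ (A ∩ A₀).card}
        ≤ ENNReal.ofReal (∑ u ∈ Finset.Icc t (min A₀.card D),
            2 * (A₀.card.choose u : ℝ) * ((D : ℝ) / ((p : ℝ) - D + 1)) ^ u) := by
  have hpj_eq : pj = hierarchicalUniformProb D (Sbar ⊆ ·) := by
    rw [hpj, hierarchicalUniformProb.subset Sbar hSbar1, Fintype.card_fin]
  subst hpj_eq
  have hDn : D ≤ Fintype.card (Fin p) := by simpa using hDp
  have hlawS : ∀ A ∈ avoidingSupport D Sbar, ν {A} = ENNReal.ofReal (1 / (D *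
      (1 - hierarchicalUniformProb D (Sbar ⊆ ·)) * (Fintype.card (Fin p)).choose #A)) := by
    intro A hA
    obtain ⟨hA, hSA⟩ := (mem_filter.1 hA).2
    simpa using hlaw A (mem_Icc.1 hA).1 (mem_Icc.1 hA).2 hSA
  have hpoint := measure_card_inter_eq_le_of_law hD hDn hpjhalf hlawS A₀ t
  have htail := measure_le_card_inter_le_of_law hD hDn hpjhalf hlawS A₀ t
  rw [Fintype.card_fin] at hpoint htail
  exact ⟨hpoint, htail⟩

/-- Let `1 ≤ D ≤ p`, fix `S̄` with `1 ≤ |S̄| ≤ D` and suppose `p_{S̄} ≤ 1/2`.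
If `S^(−j)` has the hierarchical uniform law conditioned on not containing `S̄`, i.e.
`P(S^(−j) = A) = [D(1−p_{S̄})·C(p,|A|)]⁻¹` for `1 ≤ |A| ≤ D`, `S̄ ⊄ A`, then for any finite
`A₀` and `0 ≤ t ≤ min(|A₀|, D)`:
`P(|S^(−j) ∩ A₀| = t) ≤ 2·C(|A₀|,t)·(D/(p−D+1))^t`, and consequently
`P(|S^(−j) ∩ A₀| ≥ t) ≤ Σ_{u=t}^{min(|A₀|,D)} 2·C(|A₀|,u)·(D/(p−D+1))^u`. -/
theorem stmt_3 (p D : ℕ) (hD : 1 ≤ D) (hDp : D ≤ p)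
    (Sbar : Finset (Fin p)) (hSbar1 : 1 ≤ Sbar.card) (hSbarD : Sbar.card ≤ D)
    (pj : ℝ)
    (hpj : pj = (1 / (D : ℝ)) *
      ∑ d ∈ Finset.Icc Sbar.card D,
        ((p - Sbar.card).choose (d - Sbar.card) : ℝ) / (p.choose d))
    (hpjhalf : pj ≤ 1 / 2)
    (ν : Measure (Finset (Fin p))) [IsProbabilityMeasure ν]
    (hlaw : ∀ A : Finset (Fin p), 1 ≤ A.card → A.card ≤ D → ¬ Sbar ⊆ A →
      ν {A} = ENNReal.ofReal (1 / (D * (1 - pj) * (p.choose A.card))))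
    (hlaw' : ∀ A : Finset (Fin p), Sbar ⊆ A → ν {A} = 0)
    (A₀ : Finset (Fin p)) (t : ℕ) (ht : t ≤ min A₀.card D) :
    ν {A | (A ∩ A₀).card = t}
        ≤ ENNReal.ofReal (2 * (A₀.card.choose t : ℝ) * ((D : ℝ) / ((p : ℝ) - D + 1)) ^ t)
    ∧ ν {A | t ≤ (A ∩ A₀).card}
        ≤ ENNReal.ofReal (∑ u ∈ Finset.Icc t (min A₀.card D),
            2 * (A₀.card.choose u : ℝ) * ((D : ℝ) / ((p : ℝ) - D + 1)) ^ u) :=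
  stmt_3_general p D hD hDp Sbar hSbar1 pj hpj hpjhalf ν hlaw A₀ t

end
end

section
/- Let k, m ≥ 1 be integers, let X₁,…,X_k be i.i.d. real-valued random variables with common law μ and Y₁,…,Y_m be i.i.d. real-valued random variables with common law ν, with the two families independent of each other, and let t ≥ 0. Define δ(y) = P(X₁ + t ≥ y) for y ∈ ℝ. Then P( min_{1≤i≤k} X_i + t < min_{1≤l≤m} Y_l ) ≥ (1 − E_ν[δ(Y₁)^k])^m. -/
/-!
Conditionally on `Y`, the event `min X + t < min Y` fails exactly when every `X_i` lies in
`[min Y - t, ∞)`, so its probability is `1 - δ(min Y)^k` with `δ(y) = μ [y - t, ∞)`. Since `δ` is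
antitone, `1 - δ(min Y)^k = min_l (1 - δ(Y_l)^k)`, which dominates the product
`∏_l (1 - δ(Y_l)^k)` of numbers in `[0, 1]`; the expectation of that product is
`(1 - E_ν[δ^k])^m` by independence of the `Y_l`.
-/

open MeasureTheory ProbabilityTheory Set
open scoped ENNReal

theorem ProbabilityTheory.iIndepFun.map_prod_eq_prod_pi {Ω β ι ι' : Type*} [MeasurableSpace Ω]
    [MeasurableSpace β] [Fintype ι] [Fintype ι'] {P : Measure Ω} {X : ι → Ω → β} {Y : ι' → Ω → β}
    (hX : ∀ i, Measurable (X i)) (hY : ∀ j, Measurable (Y j))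
    (hindep : iIndepFun (Sum.elim X Y) P) :
    P.map (fun ω => (fun i => X i ω, fun j => Y j ω))
      = (Measure.pi fun i => P.map (X i)).prod (Measure.pi fun j => P.map (Y j)) := by
  have := hindep.isProbabilityMeasure
  have hXY : ∀ a, Measurable (Sum.elim X Y a) := Sum.forall.2 ⟨hX, hY⟩
  have hlaw := hindep.map_fun_eq_pi_map fun a => (hXY a).aemeasurable
  have hsplit := (measurePreserving_sumPiEquivProdPi_symm fun a => P.map (Sum.elim X Y a)).symm
  have hcomp : (fun ω => (fun i => X i ω, fun j => Y j ω))
      = MeasurableEquiv.sumPiEquivProdPi (fun _ => β) ∘ fun ω a => Sum.elim X Y a ω := rfl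
  rw [hcomp, ← Measure.map_map (MeasurableEquiv.measurable _) (measurable_pi_lambda _ hXY), hlaw]
  exact hsplit.map_eq

theorem setOf_iInf_lt_eq_compl_pi {ι : Type*} [Finite ι] [Nonempty ι] (c : ℝ) :
    {x : ι → ℝ | ⨅ i, x i < c} = (univ.pi fun _ => Ici c)ᶜ := by
  ext x
  simp only [mem_ofPred_eq, ciInf_lt_iff (Finite.bddBelow_range x), mem_compl_iff, mem_pi,
    mem_univ, mem_Ici, forall_const, not_forall, not_le]

theorem measure_pi_iInf_lt {ι : Type*} [Fintype ι] [Nonempty ι] (μ : Measure ℝ)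
    [IsProbabilityMeasure μ] (c : ℝ) :
    Measure.pi (fun _ : ι => μ) {x | ⨅ i, x i < c} = 1 - μ (Ici c) ^ Fintype.card ι := by
  rw [setOf_iInf_lt_eq_compl_pi, prob_compl_eq_one_sub (.univ_pi fun _ => measurableSet_Ici),
    Measure.pi_pi, Finset.prod_const, Finset.card_univ]

theorem lintegral_fintype_prod_eq_pow {α ι : Type*} [MeasurableSpace α] [Fintype ι] (μ : Measure α)
    [IsProbabilityMeasure μ] {f : α → ℝ≥0∞} (hf : Measurable f) :
    ∫⁻ x, ∏ i, f (x i) ∂(Measure.pi fun _ : ι => μ) = (∫⁻ y, f y ∂μ) ^ Fintype.card ι := by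
  rw [lintegral_prod_eq_prod_lintegral_of_indepFun _ _
    (iIndepFun_pi fun _ => hf.aemeasurable) fun i => hf.comp (measurable_pi_apply i)]
  simp_rw [(measurePreserving_eval (fun _ : ι => μ) _).lintegral_comp hf]
  rw [Finset.prod_const, Finset.card_univ]

theorem prod_le_apply_of_le_one' {ι M : Type*} [Fintype ι] [CommMonoid M] [Preorder M]
    [MulLeftMono M] {f : ι → M} (hf : ∀ i, f i ≤ 1) (j : ι) : ∏ i, f i ≤ f j := by
  simpa using Finset.prod_le_prod_of_subset_of_le_one' (Finset.subset_univ {j}) fun i _ _ => hf i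

theorem lintegral_one_sub {α : Type*} [MeasurableSpace α] (μ : Measure α) [IsProbabilityMeasure μ]
    {f : α → ℝ≥0∞} (hf : Measurable f) (hf1 : ∀ x, f x ≤ 1) :
    ∫⁻ x, (1 - f x) ∂μ = 1 - ∫⁻ x, f x ∂μ := by
  rw [lintegral_sub hf ?_ (.of_forall hf1), lintegral_const, measure_univ, one_mul]
  exact ((lintegral_mono hf1).trans_lt (by simp)).ne

theorem measurable_measure_Ici_sub (μ : Measure ℝ) (t : ℝ) :
    Measurable fun y => μ (Ici (y - t)) :=
  Antitone.measurable fun _ _ hab => measure_mono (Ici_subset_Ici.2 (by linarith))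

theorem one_sub_lintegral_pow_le_measure_iInf_add_lt {ι ι' : Type*} [Fintype ι] [Nonempty ι]
    [Fintype ι'] [Nonempty ι'] (μ ν : Measure ℝ) [IsProbabilityMeasure μ]
    [IsProbabilityMeasure ν] (t : ℝ) :
    (1 - ∫⁻ y, μ (Ici (y - t)) ^ Fintype.card ι ∂ν) ^ Fintype.card ι'
      ≤ ((Measure.pi fun _ : ι => μ).prod (Measure.pi fun _ : ι' => ν))
          {p | (⨅ i, p.1 i) + t < ⨅ j, p.2 j} := by
  set D : ℝ → ℝ≥0∞ := fun y => μ (Ici (y - t)) ^ Fintype.card ι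
  have hD : Measurable D := (measurable_measure_Ici_sub μ t).pow_const _
  have hmeas : MeasurableSet {p : (ι → ℝ) × (ι' → ℝ) | (⨅ i, p.1 i) + t < ⨅ j, p.2 j} :=
    measurableSet_lt (by fun_prop) (by fun_prop)
  rw [← lintegral_one_sub ν hD fun _ => pow_le_one' prob_le_one _,
    ← lintegral_fintype_prod_eq_pow (ι := ι') ν (f := fun y => 1 - D y) (measurable_const.sub hD),
    Measure.prod_apply_symm hmeas]
  refine lintegral_mono fun q => ?_
  obtain ⟨j, hj⟩ := exists_eq_ciInf_of_finite (f := q)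
  calc ∏ j, (1 - D (q j)) ≤ 1 - D (q j) := prod_le_apply_of_le_one' (fun _ => tsub_le_self) j
    _ = Measure.pi (fun _ : ι => μ) {x | ⨅ i, x i < (⨅ j, q j) - t} := by
      rw [measure_pi_iInf_lt, hj]
    _ = _ := by simp_rw [lt_sub_iff_add_lt]; rfl

theorem stmt_4_general {Ω : Type*} [MeasurableSpace Ω] (P : Measure Ω) [IsProbabilityMeasure P]
    (k m : ℕ) (hk : 1 ≤ k) (hm : 1 ≤ m)
    (X : Fin k → Ω → ℝ) (Y : Fin m → Ω → ℝ)
    (hXmeas : ∀ i, Measurable (X i)) (hYmeas : ∀ l, Measurable (Y l))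
    (μ ν : Measure ℝ) [IsProbabilityMeasure μ] [IsProbabilityMeasure ν]
    (hX : ∀ i, Measure.map (X i) P = μ) (hY : ∀ l, Measure.map (Y l) P = ν)
    (hindep : iIndepFun (Sum.elim X Y) P)
    (t : ℝ)
    (δ : ℝ → ℝ) (hδ : ∀ y, δ y = (μ {x | y ≤ x + t}).toReal) :
    (1 - ∫ y, (δ y) ^ k ∂ν) ^ m
      ≤ (P {ω | (⨅ i, X i ω) + t < ⨅ l, Y l ω}).toReal := by
  have : Nonempty (Fin k) := ⟨⟨0, hk⟩⟩
  have : Nonempty (Fin m) := ⟨⟨0, hm⟩⟩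
  have hδ_pow (y : ℝ) : δ y ^ k = (μ (Ici (y - t)) ^ k).toReal := by
    rw [hδ, ENNReal.toReal_pow]
    congr 3
    ext x
    simp
  have hint : ∫ y, δ y ^ k ∂ν = (∫⁻ y, μ (Ici (y - t)) ^ k ∂ν).toReal := by
    simp_rw [hδ_pow]
    exact integral_toReal ((measurable_measure_Ici_sub μ t).pow_const k).aemeasurable
      (.of_forall fun _ => by simp [measure_lt_top])
  have hlaw := hindep.map_prod_eq_prod_pi hXmeas hYmeas
  simp_rw [hX, hY] at hlaw
  have hbound := one_sub_lintegral_pow_le_measure_iInf_add_lt (ι := Fin k) (ι' := Fin m) μ ν t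
  rw [Fintype.card_fin, Fintype.card_fin, ← hlaw] at hbound
  calc (1 - ∫ y, δ y ^ k ∂ν) ^ m = ((1 - ∫⁻ y, μ (Ici (y - t)) ^ k ∂ν) ^ m).toReal := by
        rw [hint, ENNReal.toReal_pow, ENNReal.toReal_sub_of_le _ ENNReal.one_ne_top,
          ENNReal.toReal_one]
        exact (lintegral_mono fun _ => pow_le_one' prob_le_one k).trans (by simp)
    _ ≤ (P {ω | (⨅ i, X i ω) + t < ⨅ l, Y l ω}).toReal :=
        ENNReal.toReal_mono (measure_ne_top _ _)
          (hbound.trans_eq (Measure.map_apply (by fun_prop)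
            (measurableSet_lt (by fun_prop) (by fun_prop))))

/-- Let `X₁,…,X_k` be i.i.d. with law `μ`, `Y₁,…,Y_m` i.i.d. with law `ν`,
the two families independent, and `t ≥ 0`. With `δ(y) = P(X₁ + t ≥ y)`,
`P(min_i X_i + t < min_l Y_l) ≥ (1 − E_ν[δ(Y₁)^k])^m`. -/
theorem stmt_4 {Ω : Type*} [MeasurableSpace Ω] (P : Measure Ω) [IsProbabilityMeasure P]
    (k m : ℕ) (hk : 1 ≤ k) (hm : 1 ≤ m)
    (X : Fin k → Ω → ℝ) (Y : Fin m → Ω → ℝ)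
    (hXmeas : ∀ i, Measurable (X i)) (hYmeas : ∀ l, Measurable (Y l))
    (μ ν : Measure ℝ) [IsProbabilityMeasure μ] [IsProbabilityMeasure ν]
    (hX : ∀ i, Measure.map (X i) P = μ) (hY : ∀ l, Measure.map (Y l) P = ν)
    (hindep : iIndepFun (Sum.elim X Y) P)
    (t : ℝ) (ht : 0 ≤ t)
    (δ : ℝ → ℝ) (hδ : ∀ y, δ y = (μ {x | y ≤ x + t}).toReal) :
    (1 - ∫ y, (δ y) ^ k ∂ν) ^ m
      ≤ (P {ω | (⨅ i, X i ω) + t < ⨅ l, Y l ω}).toReal :=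
  stmt_4_general P k m hk hm X Y hXmeas hYmeas μ ν hX hY hindep t δ hδ
end

section
/- Let w₁,…,w_p > 0 be weights with total W = Σ_i w_i and minimum m = min_i w_i, and let 1 ≤ d ≤ p. Sample d distinct indices from {1,…,p} sequentially without replacement, where at each step the next index is chosen among the remaining ones with probability proportional to its weight. Then for every j ∈ {1,…,p}: P( j is among the d sampled indices ) ≥ d·m/W. More precisely, P( j is not sampled ) ≤ Π_{i=0}^{d−1} (1 − m/(W − i·m)) = (W − d·m)/W. -/
/-!
Drawing `i` first, with probability `w i / c` from a pool of total weight `c`, leaves the same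
experiment on the remaining indices with total weight `c - w i`. Induction along this recursion
shows that the probabilities of all injective sequences sum to `1`, and that the probability of
never drawing `j` is at most `∏ₖ (1 - m / (c - k m))`: the first draw misses `j` with probability
at most `1 - m / c`, afterwards the pool weighs at most `c - m`, and `1 - m / x` increases with `x`.
The product telescopes to `(W - d m) / W`, and passing to the complement gives `P(j drawn) ≥ d m / W`.
-/

noncomputable section

open Finset

/-- Probability of drawing the ordered tuple `σ` in sequential weighted sampling without
replacement with weights `w` (total weight `W = Σᵢ wᵢ`): at each step the next index is
chosen among the remaining ones with probability proportional to its weight. -/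
def seqSampleProb {p : ℕ} (w : Fin p → ℝ) {d : ℕ} (σ : Fin d → Fin p) : ℝ :=
  ∏ t : Fin d, w (σ t) / ((∑ i, w i) - ∑ s ∈ Finset.univ.filter fun s => s < t, w (σ s))

namespace SeqSample

variable {p : ℕ}

def injSeqs (A : Finset (Fin p)) (d : ℕ) : Finset (Fin d → Fin p) :=
  univ.filter fun σ => Function.Injective σ ∧ ∀ t, σ t ∈ A

theorem cons_mem_injSeqs_succ {A : Finset (Fin p)} {d : ℕ} {i : Fin p} {τ : Fin d → Fin p} :
    (Fin.cons i τ : Fin (d + 1) → Fin p) ∈ injSeqs A (d + 1) ↔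
      i ∈ A ∧ τ ∈ injSeqs (A.erase i) d := by
  simp only [injSeqs, mem_filter, mem_univ, true_and, Fin.cons_injective_iff, Fin.forall_fin_succ,
    Fin.cons_zero, Fin.cons_succ, mem_erase, Set.mem_range, not_exists, forall_and]
  tauto

theorem sum_injSeqs_succ {M : Type*} [AddCommMonoid M] (A : Finset (Fin p)) (d : ℕ)
    (f : (Fin (d + 1) → Fin p) → M) :
    ∑ σ ∈ injSeqs A (d + 1), f σ = ∑ i ∈ A, ∑ τ ∈ injSeqs (A.erase i) d, f (Fin.cons i τ) := by
  rw [← univ_inter (injSeqs A (d + 1)), ← sum_ite_mem,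
    ← (Fin.consEquiv fun _ => Fin p).sum_comp, Fintype.sum_prod_type]
  simp only [Fin.consEquiv, Equiv.coe_fn_mk, cons_mem_injSeqs_succ, ite_and, ← ite_sum_zero]
  simp only [← sum_filter, filter_mem_eq_inter, univ_inter]

theorem filter_not_exists_eq_injSeqs_erase (A : Finset (Fin p)) (d : ℕ) (j : Fin p) :
    (injSeqs A d).filter (fun σ => ¬∃ t, σ t = j) = injSeqs (A.erase j) d := by
  ext σ
  simp only [injSeqs, mem_filter, mem_univ, true_and, mem_erase, not_exists, forall_and]
  tauto

def seqSampleProbOfTotal (w : Fin p → ℝ) (c : ℝ) {d : ℕ} (σ : Fin d → Fin p) : ℝ :=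
  ∏ t : Fin d, w (σ t) / (c - ∑ s ∈ univ.filter fun s => s < t, w (σ s))

theorem seqSampleProb_eq (w : Fin p → ℝ) {d : ℕ} (σ : Fin d → Fin p) :
    seqSampleProb w σ = seqSampleProbOfTotal w (∑ i, w i) σ := rfl

theorem seqSampleProbOfTotal_cons (w : Fin p → ℝ) (c : ℝ) {d : ℕ} (i : Fin p)
    (τ : Fin d → Fin p) :
    seqSampleProbOfTotal w c (Fin.cons i τ : Fin (d + 1) → Fin p)
      = w i / c * seqSampleProbOfTotal w (c - w i) τ := by
  have hpartial (t : Fin d) :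
      ∑ s ∈ univ.filter (· < t.succ), w ((Fin.cons i τ : Fin (d + 1) → Fin p) s)
        = w i + ∑ s ∈ univ.filter (· < t), w (τ s) := by
    simp [sum_filter, Fin.sum_univ_succ, Fin.succ_lt_succ_iff, Fin.succ_pos]
  simp only [seqSampleProbOfTotal, Fin.prod_univ_succ, Fin.cons_zero, Fin.cons_succ, hpartial,
    sub_add_eq_sub_sub, Fin.not_lt_zero, filter_false, sum_empty, sub_zero]

theorem sum_injSeqs_seqSampleProbOfTotal {w : Fin p → ℝ} (hw : ∀ i, 0 < w i) :
    ∀ {d : ℕ} (A : Finset (Fin p)), d ≤ #A →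
      ∑ σ ∈ injSeqs A d, seqSampleProbOfTotal w (∑ i ∈ A, w i) σ = 1
  | 0, A, _ => by simp [seqSampleProbOfTotal, injSeqs, Function.injective_of_subsingleton]
  | d + 1, A, hd => by
    have hA : A.Nonempty := card_pos.mp (by omega)
    have hWA : 0 < ∑ i ∈ A, w i := sum_pos (fun i _ => hw i) hA
    have hstep (i : Fin p) (hi : i ∈ A) :
        ∑ τ ∈ injSeqs (A.erase i) d, seqSampleProbOfTotal w (∑ k ∈ A, w k - w i) τ = 1 := by
      rw [← sum_erase_eq_sub hi]
      exact sum_injSeqs_seqSampleProbOfTotal hw (A.erase i) (by rw [card_erase_of_mem hi]; omega)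
    calc ∑ σ ∈ injSeqs A (d + 1), seqSampleProbOfTotal w (∑ i ∈ A, w i) σ
        = ∑ i ∈ A, w i / ∑ k ∈ A, w k := by
          simp_rw [sum_injSeqs_succ, seqSampleProbOfTotal_cons, ← mul_sum]
          exact sum_congr rfl fun i hi => by rw [hstep i hi, mul_one]
      _ = 1 := by rw [← sum_div, div_self hWA.ne']

theorem one_sub_div_nonneg {m x : ℝ} (hm : 0 < m) (hx : m ≤ x) : 0 ≤ 1 - m / x :=
  sub_nonneg.mpr ((div_le_one (hm.trans_le hx)).mpr hx)

theorem prod_one_sub_div_le_prod {ι : Type*} (s : Finset ι) {m : ℝ} (hm : 0 < m) {x y : ι → ℝ}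
    (hx : ∀ k ∈ s, m ≤ x k) (hxy : ∀ k ∈ s, x k ≤ y k) :
    ∏ k ∈ s, (1 - m / x k) ≤ ∏ k ∈ s, (1 - m / y k) :=
  prod_le_prod (fun k hk => one_sub_div_nonneg hm (hx k hk)) fun k hk =>
    sub_le_sub_left (div_le_div_of_nonneg_left hm.le (hm.trans_le (hx k hk)) (hxy k hk)) 1

theorem card_mul_le_sum {ι : Type*} (s : Finset ι) {w : ι → ℝ} {m : ℝ} (hwm : ∀ i, m ≤ w i) :
    (#s : ℝ) * m ≤ ∑ i ∈ s, w i := by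
  simpa using card_nsmul_le_sum s w m fun i _ => hwm i

-- `c` is the weight of the whole pool and `B` the part of it allowed to be drawn; the hypothesis
-- says that the excluded part weighs at least `m`.
theorem sum_injSeqs_seqSampleProbOfTotal_le {w : Fin p → ℝ} {m : ℝ} (hm : 0 < m)
    (hwm : ∀ i, m ≤ w i) :
    ∀ {d : ℕ} (B : Finset (Fin p)) (c : ℝ), d ≤ #B + 1 → ∑ i ∈ B, w i + m ≤ c →
      ∑ σ ∈ injSeqs B d, seqSampleProbOfTotal w c σ ≤ ∏ k ∈ range d, (1 - m / (c - k * m))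
  | 0, B, c, _, _ => by simp [seqSampleProbOfTotal, injSeqs, Function.injective_of_subsingleton]
  | d + 1, B, c, hd, hc => by
    have hdB : (d : ℝ) ≤ #B := by exact_mod_cast (by omega : d ≤ #B)
    have hc0 : 0 < c := by nlinarith [card_mul_le_sum B hwm]
    set Q := ∏ k ∈ range d, (1 - m / (c - ((k : ℝ) + 1) * m))
    have hQ : 0 ≤ Q := prod_nonneg fun k hk => by
      have hkd : (k : ℝ) + 1 ≤ d := by exact_mod_cast mem_range.mp hk
      exact one_sub_div_nonneg hm (by nlinarith [card_mul_le_sum B hwm])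
    have hstep (i : Fin p) (hi : i ∈ B) :
        ∑ τ ∈ injSeqs (B.erase i) d, seqSampleProbOfTotal w (c - w i) τ ≤ Q := by
      have herase := sum_erase_eq_sub (f := w) hi
      have hdi' : d ≤ #(B.erase i) + 1 := by rw [card_erase_of_mem hi]; omega
      have hdi : (d : ℝ) ≤ #(B.erase i) + 1 := by exact_mod_cast hdi'
      have hci : (d : ℝ) * m ≤ c - w i := by nlinarith [card_mul_le_sum (B.erase i) hwm]
      refine (sum_injSeqs_seqSampleProbOfTotal_le hm hwm (B.erase i) (c - w i) hdi'
        (by linarith)).trans (prod_one_sub_div_le_prod _ hm (fun k hk => ?_) (fun k _ => ?_))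
      · have hkd : (k : ℝ) + 1 ≤ d := by exact_mod_cast mem_range.mp hk
        nlinarith
      · linarith [hwm i]
    calc ∑ σ ∈ injSeqs B (d + 1), seqSampleProbOfTotal w c σ
        = ∑ i ∈ B, w i / c * ∑ τ ∈ injSeqs (B.erase i) d, seqSampleProbOfTotal w (c - w i) τ := by
          simp_rw [sum_injSeqs_succ, seqSampleProbOfTotal_cons, ← mul_sum]
      _ ≤ ∑ i ∈ B, w i / c * Q :=
          sum_le_sum fun i hi => mul_le_mul_of_nonneg_left (hstep i hi)
            (div_nonneg (hm.le.trans (hwm i)) hc0.le)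
      _ = (∑ i ∈ B, w i) / c * Q := by rw [← sum_mul, ← sum_div]
      _ ≤ (1 - m / c) * Q := by
          gcongr
          rwa [le_sub_iff_add_le, ← add_div, div_le_one hc0]
      _ = ∏ k ∈ range (d + 1), (1 - m / (c - k * m)) := by
          rw [prod_range_succ', mul_comm]
          push_cast
          simp [Q]

theorem prod_range_one_sub_div_sub_mul (m c : ℝ) :
    ∀ {d : ℕ}, (∀ k < d, c - k * m ≠ 0) → c ≠ 0 →
      ∏ k ∈ range d, (1 - m / (c - k * m)) = (c - d * m) / c
  | 0, _, hc => by simp [div_self hc]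
  | d + 1, h, hc => by
    have hd : c - d * m ≠ 0 := h d (by omega)
    rw [prod_range_succ, prod_range_one_sub_div_sub_mul m c (fun k hk => h k (by omega)) hc]
    push_cast
    field_simp
    ring

theorem sum_injSeqs_univ_seqSampleProb {d : ℕ} {w : Fin p → ℝ} (hw : ∀ i, 0 < w i)
    (hdp : d ≤ p) : ∑ σ ∈ injSeqs univ d, seqSampleProb w σ = 1 :=
  sum_injSeqs_seqSampleProbOfTotal hw univ (by simpa using hdp)

theorem sum_injSeqs_erase_seqSampleProb_le {d : ℕ} {w : Fin p → ℝ} {m : ℝ} (hm : 0 < m)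
    (hwm : ∀ i, m ≤ w i) (hdp : d ≤ p) (j : Fin p) :
    ∑ σ ∈ injSeqs (univ.erase j) d, seqSampleProb w σ
      ≤ ∏ k ∈ range d, (1 - m / (∑ i, w i - k * m)) := by
  refine sum_injSeqs_seqSampleProbOfTotal_le hm hwm _ _
    (by rw [card_erase_of_mem (mem_univ j), card_univ, Fintype.card_fin]; omega) ?_
  rw [← add_sum_erase univ w (mem_univ j)]
  linarith [hwm j]

end SeqSample

open SeqSample

theorem stmt_13_general (p d : ℕ) (hdp : d ≤ p)
    (w : Fin p → ℝ) (hw : ∀ i, 0 < w i)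
    (W : ℝ) (hW : W = ∑ i, w i)
    (m : ℝ) (hm : m = ⨅ i, w i)
    (j : Fin p) :
    (d : ℝ) * m / W ≤
      ∑ σ ∈ (Finset.univ : Finset (Fin d → Fin p)).filter
          fun σ => Function.Injective σ ∧ ∃ t, σ t = j,
        seqSampleProb w σ
    ∧ (∑ σ ∈ (Finset.univ : Finset (Fin d → Fin p)).filter
          fun σ => Function.Injective σ ∧ ∀ t, σ t ≠ j,
        seqSampleProb w σ)
        ≤ ∏ i ∈ Finset.range d, (1 - m / (W - i * m))
    ∧ ∏ i ∈ Finset.range d, (1 - m / (W - i * m)) = (W - d * m) / W := by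
  have : Nonempty (Fin p) := ⟨j⟩
  obtain ⟨i₀, hi₀⟩ := exists_eq_ciInf_of_finite (f := w)
  have hm_pos : 0 < m := hm ▸ hi₀ ▸ hw i₀
  have hm_le (i : Fin p) : m ≤ w i := hm ▸ ciInf_le (Finite.bddBelow_range w) i
  have hpW : (p : ℝ) * m ≤ W := by simpa [hW] using card_mul_le_sum univ hm_le
  have hW_pos : 0 < W := hW ▸ sum_pos (fun i _ => hw i) univ_nonempty
  have hprod : ∏ i ∈ range d, (1 - m / (W - i * m)) = (W - d * m) / W := by
    refine prod_range_one_sub_div_sub_mul m W (fun k hk => ?_) hW_pos.ne'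
    have : (k : ℝ) + 1 ≤ p := by exact_mod_cast hk.trans_le hdp
    nlinarith
  have hhit : (univ.filter fun σ : Fin d → Fin p => Function.Injective σ ∧ ∃ t, σ t = j)
      = (injSeqs univ d).filter fun σ => ∃ t, σ t = j := by
    ext σ; simp [injSeqs]
  have hmiss : (univ.filter fun σ : Fin d → Fin p => Function.Injective σ ∧ ∀ t, σ t ≠ j)
      = injSeqs (univ.erase j) d := by
    ext σ; simp [injSeqs]
  have htotal := sum_injSeqs_univ_seqSampleProb hw hdp
  rw [← sum_filter_add_sum_filter_not _ fun σ => ∃ t, σ t = j,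
    filter_not_exists_eq_injSeqs_erase] at htotal
  have hmiss_le := hW ▸ sum_injSeqs_erase_seqSampleProb_le hm_pos hm_le hdp j
  rw [hhit, hmiss]
  refine ⟨?_, hmiss_le, hprod⟩
  rw [hprod] at hmiss_le
  have : (d : ℝ) * m / W = 1 - (W - d * m) / W := by field_simp; ring
  linarith

/-- Sequential weighted sampling without replacement of `d` indices from
`{1,…,p}` with weights `w > 0`, total `W` and minimum `m`.  For every `j`,
`P(j is sampled) ≥ d·m/W`; more precisely
`P(j is not sampled) ≤ ∏_{i=0}^{d−1} (1 − m/(W − i·m)) = (W − d·m)/W`. -/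
theorem stmt_13 (p d : ℕ) (hd : 1 ≤ d) (hdp : d ≤ p)
    (w : Fin p → ℝ) (hw : ∀ i, 0 < w i)
    (W : ℝ) (hW : W = ∑ i, w i)
    (m : ℝ) (hm : m = ⨅ i, w i)
    (j : Fin p) :
    (d : ℝ) * m / W ≤
      ∑ σ ∈ (Finset.univ : Finset (Fin d → Fin p)).filter
          fun σ => Function.Injective σ ∧ ∃ t, σ t = j,
        seqSampleProb w σ
    ∧ (∑ σ ∈ (Finset.univ : Finset (Fin d → Fin p)).filter
          fun σ => Function.Injective σ ∧ ∀ t, σ t ≠ j,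
        seqSampleProb w σ)
        ≤ ∏ i ∈ Finset.range d, (1 - m / (W - i * m))
    ∧ ∏ i ∈ Finset.range d, (1 - m / (W - i * m)) = (W - d * m) / W :=
  stmt_13_general p d hdp w hw W hW m hm j

end
end

section
/- Let 1 ≤ D ≤ p, C₀ > 0, and let η̃ = (η̃₁,…,η̃_p) be a probability vector with η̃_j ≥ (C₀/p)/(D + C₀) for every j. Let S follow the hierarchical restrictive multinomial distribution R(U₀, p, η̃). Then for every j and every d ∈ {1,…,D}: P(j ∈ S | |S| = d) ≥ C₀·d/((D+C₀)·p), and consequently P(j ∈ S) ≥ (D+1)·C₀/(2(D+C₀)·p). -/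
/-!
Conditionally on `|S| = d`, the set `S` consists of the first `d` draws, so
`P(j ∈ S | |S| = d) = 1 - P(j is missed by d draws)`. If the weights have total `c` and are all
at least `b`, the probability of missing `j` in `d` draws is at most `1 - d b / c`: by induction
on `d`, the first draw avoids `j` with probability at most `(c - b) / c`, after which the
remaining weight `c - wᵢ` is at most `c - b`, and `(c - b)/c · (1 - d b/(c - b)) = 1 - (d + 1) b/c`.
With `c = 1` and `b = C₀ / (p (D + C₀))` this is the first bound; averaging it over the uniform
size `d ∈ {1, …, D}` gives the second, as `∑ d = D (D + 1) / 2`.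
-/

noncomputable section

open Finset

open Classical in
/-- Point mass of the hierarchical restrictive multinomial distribution `R(U₀, p, w)`:
first a size `d` is drawn uniformly from `{1,…,D}`, then a subset of size `d` is drawn by
sequential weighted sampling without replacement with weights `w`. -/
def rmnMass (p D : ℕ) (w : Fin p → ℝ) (A : Finset (Fin p)) : ℝ :=
  if 1 ≤ A.card ∧ A.card ≤ D then
    (1 / (D : ℝ)) *
      ∑ σ ∈ (Finset.univ : Finset (Fin A.card → Fin p)).filter
          fun σ => Function.Injective σ ∧ Finset.image σ Finset.univ = A,
        seqSampleProb w σ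
  else 0

namespace SeqSampling

variable {p : ℕ} (w : Fin p → ℝ)

/-- `seqSampleProb` with the total weight `c` as a parameter, so that removing the first draw `i`
gives the same expression with total `c - w i` (`seqProb_cons`). -/
def seqProb (c : ℝ) {d : ℕ} (σ : Fin d → Fin p) : ℝ :=
  ∏ t : Fin d, w (σ t) / (c - ∑ s ∈ univ.filter fun s => s < t, w (σ s))

theorem seqSampleProb_eq_seqProb {d : ℕ} (σ : Fin d → Fin p) :
    seqSampleProb w σ = seqProb w (∑ i, w i) σ := rfl

theorem seqProb_zero (c : ℝ) (σ : Fin 0 → Fin p) : seqProb w c σ = 1 := by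
  simp [seqProb]

theorem seqProb_cons (c : ℝ) {d : ℕ} (i : Fin p) (τ : Fin d → Fin p) :
    seqProb w c (Fin.cons i τ) = w i / c * seqProb w (c - w i) τ := by
  unfold seqProb
  rw [Fin.prod_univ_succ]
  congr 1
  · simp
  · refine prod_congr rfl fun t _ => ?_
    have hprefix : ∑ s ∈ univ.filter (· < t.succ), w ((Fin.cons i τ : Fin (d + 1) → Fin p) s)
        = w i + ∑ s ∈ univ.filter (· < t), w (τ s) := by
      simp [sum_filter, Fin.sum_univ_succ, Fin.succ_lt_succ_iff, Fin.succ_pos]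
    rw [Fin.cons_succ, hprefix, sub_add_eq_sub_sub]

open Classical in
/-- For `c` the total weight of the pool, the probability that the first `d` draws land in `U`. -/
def tupleMass (c : ℝ) (U : Finset (Fin p)) (d : ℕ) : ℝ :=
  ∑ σ : Fin d → Fin p, if Function.Injective σ ∧ ∀ t, σ t ∈ U then seqProb w c σ else 0

theorem tupleMass_zero (c : ℝ) (U : Finset (Fin p)) : tupleMass w c U 0 = 1 := by
  simp [tupleMass, seqProb_zero, Function.injective_of_subsingleton]

theorem tupleMass_succ (c : ℝ) (U : Finset (Fin p)) (d : ℕ) :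
    tupleMass w c U (d + 1) = ∑ i ∈ U, w i / c * tupleMass w (c - w i) (U.erase i) d := by
  classical
  have hcons : ∀ (i : Fin p) (τ : Fin d → Fin p),
      (Function.Injective (Fin.cons i τ : Fin (d + 1) → Fin p) ∧
          ∀ t, (Fin.cons i τ : Fin (d + 1) → Fin p) t ∈ U) ↔
        i ∈ U ∧ Function.Injective τ ∧ ∀ t, τ t ∈ U.erase i := by
    intro i τ
    simp only [Fin.cons_injective_iff, Fin.forall_fin_succ, Fin.cons_zero, Fin.cons_succ,
      mem_erase, Set.mem_range, not_exists, ne_comm (a := τ _)]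
    grind
  unfold tupleMass
  rw [← (Fin.consEquiv fun _ => Fin p).sum_comp, Fintype.sum_prod_type, ← Fintype.sum_ite_mem U]
  refine sum_congr rfl fun i _ => ?_
  split_ifs with hi
  · rw [mul_sum]
    refine sum_congr rfl fun τ _ => ?_
    change (if Function.Injective (Fin.cons i τ : Fin (d + 1) → Fin p) ∧
      ∀ t, (Fin.cons i τ : Fin (d + 1) → Fin p) t ∈ U then seqProb w c (Fin.cons i τ) else 0) = _
    rw [if_congr (hcons i τ) rfl rfl, seqProb_cons, mul_ite, mul_zero]
    simp only [hi, true_and]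
  · exact sum_eq_zero fun τ _ => if_neg fun h => hi ((hcons i τ).1 h).1

theorem tupleMass_sum_self (hw : ∀ i, 0 < w i) {d : ℕ} {T : Finset (Fin p)} (hd : d ≤ #T) :
    tupleMass w (∑ i ∈ T, w i) T d = 1 := by
  induction d generalizing T with
  | zero => exact tupleMass_zero w _ T
  | succ d ih =>
    have hc : 0 < ∑ i ∈ T, w i := sum_pos (fun i _ => hw i) (card_pos.1 (by omega))
    calc tupleMass w (∑ i ∈ T, w i) T (d + 1)
        = ∑ i ∈ T, w i / ∑ k ∈ T, w k := by
          rw [tupleMass_succ]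
          refine sum_congr rfl fun i hi => ?_
          rw [← sum_erase_eq_sub hi, ih (by rw [card_erase_of_mem hi]; omega), mul_one]
      _ = 1 := by rw [← sum_div, div_self hc.ne']

theorem tupleMass_erase_le {b : ℝ} (hb : 0 < b) (hw : ∀ i, b ≤ w i) {d : ℕ}
    {T : Finset (Fin p)} {j : Fin p} (hj : j ∈ T) (hd : d ≤ #T) :
    tupleMass w (∑ i ∈ T, w i) (T.erase j) d ≤ 1 - d * b / ∑ i ∈ T, w i := by
  induction d generalizing T j with
  | zero => simp [tupleMass_zero]
  | succ d ih =>
    set c := ∑ i ∈ T, w i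
    have hw0 : ∀ i, 0 ≤ w i := fun i => hb.le.trans (hw i)
    have hcard : ((d + 1 : ℕ) : ℝ) * b ≤ c := by
      have := card_nsmul_le_sum T w b fun i _ => hw i
      rw [nsmul_eq_mul] at this
      exact le_trans (by gcongr) this
    have hc : 0 < c := lt_of_lt_of_le (by positivity) hcard
    have hterm : ∀ i ∈ T.erase j,
        w i / c * tupleMass w (c - w i) ((T.erase j).erase i) d ≤
          w i / c * (1 - d * b / (c - b)) := by
      intro i hi
      obtain ⟨hij, hiT⟩ := mem_erase.1 hi
      have hci : c - w i = ∑ k ∈ T.erase i, w k := (sum_erase_eq_sub hiT).symm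
      have hjT : j ∈ T.erase i := mem_erase.2 ⟨Ne.symm hij, hj⟩
      have hci_pos : 0 < c - w i := hci ▸ lt_of_lt_of_le (hb.trans_le (hw j))
        (single_le_sum (fun k _ => hw0 k) hjT)
      have hbi := hw i
      have hwi := hw0 i
      calc w i / c * tupleMass w (c - w i) ((T.erase j).erase i) d
          ≤ w i / c * (1 - d * b / (c - w i)) := by
            rw [erase_right_comm, hci]
            gcongr
            exact ih hjT (by rw [card_erase_of_mem hiT]; omega)
        _ ≤ w i / c * (1 - d * b / (c - b)) := by
            gcongr
    have hwjc : w j ≤ c := single_le_sum (fun k _ => hw0 k) hj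
    calc tupleMass w c (T.erase j) (d + 1)
        ≤ ∑ i ∈ T.erase j, w i / c * (1 - d * b / (c - b)) := by
          rw [tupleMass_succ]; exact sum_le_sum hterm
      _ = (c - w j) / c * (1 - d * b / (c - b)) := by
          rw [← sum_mul, ← sum_div, sum_erase_eq_sub hj]
      _ ≤ 1 - (d + 1 : ℕ) * b / c := by
          rcases (sub_nonneg.2 ((hw j).trans hwjc)).eq_or_lt with hcb | hcb
          · rw [show c - w j = 0 by linarith [hw j], zero_div, zero_mul, sub_nonneg,
              div_le_one hc]
            exact hcard
          · have hK : 0 ≤ 1 - d * b / (c - b) := by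
              rw [sub_nonneg, div_le_one hcb]
              push_cast at hcard
              linarith
            calc (c - w j) / c * (1 - d * b / (c - b))
                ≤ (c - b) / c * (1 - d * b / (c - b)) := by gcongr; exact hw j
              _ = 1 - (d + 1 : ℕ) * b / c := by field_simp; push_cast; ring

open Classical in
theorem sum_seqSampleProb_mem_range_eq (j : Fin p) (d : ℕ) :
    ∑ σ : Fin d → Fin p,
        (if Function.Injective σ ∧ j ∈ Set.range σ then seqSampleProb w σ else 0) =
      tupleMass w (∑ i, w i) univ d - tupleMass w (∑ i, w i) (univ.erase j) d := by
  rw [eq_sub_iff_add_eq, tupleMass, tupleMass, ← sum_add_distrib]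
  refine sum_congr rfl fun σ _ => ?_
  by_cases hj : j ∈ Set.range σ
  · have hmiss : ¬ ∀ t, σ t ∈ univ.erase j := fun h => by
      obtain ⟨t, ht⟩ := hj
      simpa [ht] using h t
    rw [if_neg (show ¬(Function.Injective σ ∧ _) from fun h => hmiss h.2), add_zero]
    simp [hj, seqSampleProb_eq_seqProb]
  · have hmiss : ∀ t, σ t ∈ univ.erase j := fun t => by
      simpa using fun h => hj ⟨t, h⟩
    simp [hj, hmiss]

theorem le_sum_seqSampleProb_mem_range {b : ℝ} (hb : 0 < b) (hw : ∀ i, b ≤ w i) (j : Fin p)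
    {d : ℕ} (hd : d ≤ p) :
    d * b / ∑ i, w i ≤ ∑ σ : Fin d → Fin p,
      (if Function.Injective σ ∧ j ∈ Set.range σ then seqSampleProb w σ else 0) := by
  have hcard : d ≤ #(univ : Finset (Fin p)) := by simpa using hd
  rw [sum_seqSampleProb_mem_range_eq, tupleMass_sum_self w (fun i => hb.trans_le (hw i)) hcard]
  linarith [tupleMass_erase_le w hb hw (mem_univ j) hcard]

end SeqSampling

section Hierarchical

variable {p D : ℕ} (w : Fin p → ℝ)

open Classical in
theorem natCast_mul_rmnMass {A : Finset (Fin p)} (hA1 : 1 ≤ #A) (hAD : #A ≤ D) :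
    (D : ℝ) * rmnMass p D w A =
      ∑ σ ∈ univ.filter fun σ : Fin #A → Fin p => Function.Injective σ ∧ image σ univ = A,
        seqSampleProb w σ := by
  have hD : (D : ℝ) ≠ 0 := by norm_cast; omega
  rw [rmnMass, if_pos ⟨hA1, hAD⟩, ← mul_assoc, mul_one_div_cancel hD, one_mul]

open Classical in
theorem sum_card_eq_natCast_mul_rmnMass {d : ℕ} (hd1 : 1 ≤ d) (hdD : d ≤ D) (j : Fin p) :
    ∑ A ∈ univ.filter (fun A : Finset (Fin p) => #A = d ∧ j ∈ A), (D : ℝ) * rmnMass p D w A =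
      ∑ σ : Fin d → Fin p,
        (if Function.Injective σ ∧ j ∈ Set.range σ then seqSampleProb w σ else 0) := by
  have hmaps : ∀ σ ∈ univ.filter fun σ : Fin d → Fin p =>
      Function.Injective σ ∧ j ∈ Set.range σ,
      image σ univ ∈ univ.filter (fun A : Finset (Fin p) => #A = d ∧ j ∈ A) := by
    intro σ hσ
    simp only [mem_filter, mem_univ, true_and] at hσ ⊢
    exact ⟨by rw [card_image_of_injective _ hσ.1, card_univ, Fintype.card_fin], by simpa using hσ.2⟩
  rw [← sum_filter, ← sum_fiberwise_of_maps_to hmaps]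
  refine sum_congr rfl fun A hA => ?_
  simp only [mem_filter, mem_univ, true_and] at hA
  obtain ⟨rfl, hjA⟩ := hA
  rw [natCast_mul_rmnMass w hd1 hdD, filter_filter]
  refine sum_congr (filter_congr fun σ _ => ⟨?_, fun h => ⟨h.1.1, h.2⟩⟩) fun _ _ => rfl
  rintro ⟨hinj, himage⟩
  rw [← himage] at hjA
  exact ⟨⟨hinj, by simpa using hjA⟩, himage⟩

open Classical in
theorem sum_rmnMass_mem_eq_sum_Icc (j : Fin p) :
    ∑ A ∈ univ.filter (fun A : Finset (Fin p) => j ∈ A), rmnMass p D w A =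
      ∑ d ∈ Icc 1 D, ∑ A ∈ univ.filter (fun A : Finset (Fin p) => #A = d ∧ j ∈ A),
        rmnMass p D w A := by
  calc ∑ A ∈ univ.filter (fun A : Finset (Fin p) => j ∈ A), rmnMass p D w A
      = ∑ A ∈ univ.filter (fun A : Finset (Fin p) => j ∈ A),
          ∑ d ∈ Icc 1 D, if #A = d then rmnMass p D w A else 0 := by
        refine sum_congr rfl fun A _ => ?_
        rw [sum_ite_eq]
        split_ifs with hA
        · rfl
        · rw [rmnMass, if_neg (by simpa using hA)]
    _ = _ := by
        rw [sum_comm]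
        refine sum_congr rfl fun d _ => ?_
        rw [← sum_filter, filter_filter]
        simp only [and_comm]

end Hierarchical

theorem sum_Icc_one_natCast (n : ℕ) : ∑ d ∈ Icc 1 n, (d : ℝ) = n * (n + 1) / 2 := by
  induction n with
  | zero => simp
  | succ n ih =>
    rw [sum_Icc_succ_top (by omega), ih]
    push_cast
    ring

open SeqSampling in
theorem stmt_14_general (p D : ℕ) (hD : 1 ≤ D) (hDp : D ≤ p)
    (C₀ : ℝ) (hC₀ : 0 < C₀)
    (w : Fin p → ℝ) (hw1 : ∑ i, w i = 1)
    (hwlow : ∀ i, (C₀ / p) / (D + C₀) ≤ w i)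
    (j : Fin p) :
    (∀ d ∈ Finset.Icc 1 D,
      C₀ * d / ((D + C₀) * p) ≤
        ∑ A ∈ (Finset.univ : Finset (Finset (Fin p))).filter
            fun A => A.card = d ∧ j ∈ A,
          (D : ℝ) * rmnMass p D w A)
    ∧ (D + 1 : ℝ) * C₀ / (2 * (D + C₀) * p) ≤
        ∑ A ∈ (Finset.univ : Finset (Finset (Fin p))).filter fun A => j ∈ A,
          rmnMass p D w A := by
  have hp : (0 : ℝ) < p := by norm_cast; omega
  have hDpos : (0 : ℝ) < D := by norm_cast
  have hb : 0 < (C₀ / p) / (D + C₀) := by positivity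
  have hsize : ∀ d ∈ Icc 1 D, C₀ * d / ((D + C₀) * p) ≤
      ∑ A ∈ univ.filter (fun A : Finset (Fin p) => #A = d ∧ j ∈ A), (D : ℝ) * rmnMass p D w A := by
    intro d hd
    obtain ⟨hd1, hdD⟩ := mem_Icc.1 hd
    rw [sum_card_eq_natCast_mul_rmnMass w hd1 hdD]
    calc C₀ * d / ((D + C₀) * p) = d * ((C₀ / p) / (D + C₀)) / ∑ i, w i := by
          rw [hw1]; field_simp
      _ ≤ _ := le_sum_seqSampleProb_mem_range w hb hwlow j (hdD.trans hDp)
  refine ⟨hsize, ?_⟩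
  rw [sum_rmnMass_mem_eq_sum_Icc]
  calc (D + 1 : ℝ) * C₀ / (2 * (D + C₀) * p)
      = ∑ d ∈ Icc 1 D, C₀ * d / ((D + C₀) * p) / D := by
        rw [← sum_div, ← sum_div, ← mul_sum, sum_Icc_one_natCast]
        field_simp
    _ ≤ _ := sum_le_sum fun d hd => by
        rw [div_le_iff₀' hDpos, mul_sum]
        exact hsize d hd

/-- Let `1 ≤ D ≤ p`, `C₀ > 0`, and `η̃` a probability vector with
`η̃_j ≥ (C₀/p)/(D + C₀)` for every `j`.  If `S ∼ R(U₀, p, η̃)`, then for every `j` and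
every `d ∈ {1,…,D}`: `P(j ∈ S | |S| = d) ≥ C₀·d/((D+C₀)·p)`, and consequently
`P(j ∈ S) ≥ (D+1)·C₀/(2(D+C₀)·p)`. -/
theorem stmt_14 (p D : ℕ) (hD : 1 ≤ D) (hDp : D ≤ p)
    (C₀ : ℝ) (hC₀ : 0 < C₀)
    (w : Fin p → ℝ) (hw0 : ∀ i, 0 ≤ w i) (hw1 : ∑ i, w i = 1)
    (hwlow : ∀ i, (C₀ / p) / (D + C₀) ≤ w i)
    (j : Fin p) :
    (∀ d ∈ Finset.Icc 1 D,
      C₀ * d / ((D + C₀) * p) ≤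
        ∑ A ∈ (Finset.univ : Finset (Finset (Fin p))).filter
            fun A => A.card = d ∧ j ∈ A,
          (D : ℝ) * rmnMass p D w A)
    ∧ (D + 1 : ℝ) * C₀ / (2 * (D + C₀) * p) ≤
        ∑ A ∈ (Finset.univ : Finset (Finset (Fin p))).filter fun A => j ∈ A,
          rmnMass p D w A :=
  stmt_14_general p D hD hDp C₀ hC₀ w hw1 hwlow j

end
end

section
/- (Proposition A.1(i).) Suppose the signal set decomposes as S* = S*_{[0]} ∪ S*_{[1]} and Assumption A holds: (a) for every j ∈ S*_{[0]} and every d ≥ 1, Cr(S) − Cr(S') > 2ε_n whenever |S|, |S'| ≤ D, |S ∩ S*| < d, |S' ∩ S*| ≥ d, j ∈ S', and j ∉ S; (b) for every j ∈ S*_{[1]} and every d ≥ |S*_{[0]}| + 1, the same inequality holds under the same constraints. Then, in the asymptotic regime n → ∞ with D ≪ p and fixed |S*| = p*, whenever B₂ ≍ (p/D)^{|S*_{[0]}|+1}, Assumption 1 holds: for each j ∈ S* there is S̄_j ∋ j with |S̄_j| ≤ D such that B₂ · inf_{j∈S*} p_j ≳ 1 and limsup_{n,D,B₂→∞} B₂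 · sup_{j∈S*} E[δ_j(S^(−j))^{B₂ p_j/2}] < ∞. -/
/-!
Take `S̄_j = S*_{[0]} ∪ {j}` for `j ∉ S*_{[0]}`, and for `j ∈ S*_{[0]}` the set `S*_{[0]}` together
with one signal variable outside it (just `S*_{[0]}` if there is none). By the hockey-stick
identity, `p_T = (D+1)/((|T|+1)D) · C(D,|T|)/C(p,|T|) ≍ (D/p)^{|T|}`, so `B₂ p_j ≳ 1`.
Assumption A forces `δ_j(A) = 0` as soon as `A ⊉ S̄_j` meets `S*` in fewer than `|S̄_j|` points:
every `A' ⊇ S̄_j` then has more signal variables than `A` and contains a variable of `S̄_j`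
missing from `A`. So `E[δ_j(S^(−j))^{B₂ p_j/2}]` is at most the probability that `S^(−j)` meets
`S*` in `|S*_{[0]}|+1` points, which a union bound over the `(|S*_{[0]}|+1)`-subsets of `S*`
makes `O((D/p)^{|S*_{[0]}|+1}) = O(1/B₂)`.
-/

open MeasureTheory Filter

noncomputable section

def pjOf (p D : ℕ) (Sb : Finset (Fin p)) : ℝ :=
  (1 / (D : ℝ)) * ∑ d ∈ Finset.Icc Sb.card D,
    ((p - Sb.card).choose (d - Sb.card) : ℝ) / (p.choose d)

def lawJ (p D : ℕ) (Sb A : Finset (Fin p)) : ℝ :=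
  if Sb ⊆ A ∧ A.card ≤ D then 1 / (D * pjOf p D Sb * (p.choose A.card)) else 0

def lawNotJ (p D : ℕ) (Sb A : Finset (Fin p)) : ℝ :=
  if 1 ≤ A.card ∧ A.card ≤ D ∧ ¬ Sb ⊆ A then
    1 / (D * (1 - pjOf p D Sb) * (p.choose A.card))
  else 0

open Classical in
def deltaJ (p D : ℕ) (Cr : Finset (Fin p) → ℝ) (εn : ℝ) (Sb T : Finset (Fin p)) : ℝ :=
  ∑ A : Finset (Fin p), lawJ p D Sb A * (if Cr T - Cr A < 2 * εn then 1 else 0)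

def ETerm (p D B₂ : ℕ) (Cr : Finset (Fin p) → ℝ) (εn : ℝ) (Sb : Finset (Fin p)) : ℝ :=
  ∑ A : Finset (Fin p),
    lawNotJ p D Sb A * (deltaJ p D Cr εn Sb A) ^ ((B₂ : ℝ) * pjOf p D Sb / 2)

open Finset

section HierarchicalUniform

variable {p D : ℕ}

/-- Mass of `A` under the hierarchical-uniform law; the formula also charges `A = ∅`. -/
def hierUnifWeight (p D : ℕ) (A : Finset (Fin p)) : ℝ :=
  if #A ≤ D then 1 / ((D : ℝ) * p.choose #A) else 0

lemma hierUnifWeight_nonneg (A : Finset (Fin p)) : 0 ≤ hierUnifWeight p D A := by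
  unfold hierUnifWeight
  split_ifs <;> positivity

lemma sum_ite_superset_eq_sum_choose (T : Finset (Fin p)) (g : ℕ → ℝ) :
    ∑ A : Finset (Fin p), (if T ⊆ A ∧ #A ≤ D then g #A else 0)
      = ∑ d ∈ Icc #T D, ((p - #T).choose (d - #T) : ℝ) * g d := by
  rw [← sum_filter, ← sum_fiberwise_of_maps_to' (t := Icc #T D) (g := card) ?_ g]
  · refine sum_congr rfl fun d hd => ?_
    have hfiber : {A ∈ {A ∈ (univ : Finset (Finset (Fin p))) | T ⊆ A ∧ #A ≤ D} | #A = d}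
        = {A ∈ powersetCard d (univ : Finset (Fin p)) | T ⊆ A} := by
      ext A
      simp only [mem_filter, mem_univ, true_and, mem_powersetCard, subset_univ]
      constructor
      · rintro ⟨⟨hTA, -⟩, hA⟩
        exact ⟨hA, hTA⟩
      · rintro ⟨hA, hTA⟩
        exact ⟨⟨hTA, hA ▸ (mem_Icc.1 hd).2⟩, hA⟩
    rw [sum_const, hfiber, card_filter_powersetCard_subset T univ d (subset_univ T)
      (mem_Icc.1 hd).1, card_univ, Fintype.card_fin, nsmul_eq_mul]
  · intro A hA
    simp only [mem_filter, mem_univ, true_and] at hA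
    exact mem_Icc.2 ⟨card_le_card hA.1, hA.2⟩

lemma sum_hierUnifWeight_superset_eq_pjOf (T : Finset (Fin p)) :
    ∑ A, (if T ⊆ A then hierUnifWeight p D A else 0) = pjOf p D T := by
  simp only [hierUnifWeight, ← ite_and]
  rw [sum_ite_superset_eq_sum_choose T (fun d => 1 / ((D : ℝ) * p.choose d)), pjOf, mul_sum]
  refine sum_congr rfl fun d _ => ?_
  ring

lemma pjOf_nonneg (T : Finset (Fin p)) : 0 ≤ pjOf p D T := by
  rw [← sum_hierUnifWeight_superset_eq_pjOf]
  exact sum_nonneg fun A _ => ite_nonneg (hierUnifWeight_nonneg A) le_rfl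

lemma lawJ_eq (Sb A : Finset (Fin p)) :
    lawJ p D Sb A = (if Sb ⊆ A then hierUnifWeight p D A else 0) / pjOf p D Sb := by
  unfold lawJ hierUnifWeight
  by_cases hSA : Sb ⊆ A
  · by_cases hA : #A ≤ D
    · simp only [hSA, hA, and_self, if_true, div_div, mul_right_comm]
    · simp [hA]
  · simp [hSA]

lemma sum_lawJ (Sb : Finset (Fin p)) (h : pjOf p D Sb ≠ 0) :
    ∑ A, lawJ p D Sb A = 1 := by
  simp only [lawJ_eq, ← sum_div, sum_hierUnifWeight_superset_eq_pjOf, div_self h]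

lemma lawJ_nonneg (Sb A : Finset (Fin p)) : 0 ≤ lawJ p D Sb A := by
  rw [lawJ_eq]
  exact div_nonneg (ite_nonneg (hierUnifWeight_nonneg A) le_rfl) (pjOf_nonneg Sb)

lemma deltaJ_nonneg (Cr : Finset (Fin p) → ℝ) (ε : ℝ) (Sb A : Finset (Fin p)) :
    0 ≤ deltaJ p D Cr ε Sb A :=
  sum_nonneg fun A' _ => mul_nonneg (lawJ_nonneg Sb A') (ite_nonneg zero_le_one le_rfl)

lemma deltaJ_le_one (Cr : Finset (Fin p) → ℝ) (ε : ℝ) {Sb : Finset (Fin p)}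
    (h : pjOf p D Sb ≠ 0) (A : Finset (Fin p)) : deltaJ p D Cr ε Sb A ≤ 1 := by
  rw [← sum_lawJ Sb h]
  refine sum_le_sum fun A' _ => mul_le_of_le_one_right (lawJ_nonneg Sb A') ?_
  split_ifs <;> norm_num

lemma lawNotJ_nonneg {Sb : Finset (Fin p)} (h : pjOf p D Sb ≤ 1) (A : Finset (Fin p)) :
    0 ≤ lawNotJ p D Sb A := by
  have := sub_nonneg.2 h
  unfold lawNotJ
  split_ifs <;> positivity

lemma lawNotJ_le {Sb : Finset (Fin p)} (h : pjOf p D Sb ≤ 1 / 2) (A : Finset (Fin p)) :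
    lawNotJ p D Sb A ≤ 2 * hierUnifWeight p D A := by
  unfold lawNotJ hierUnifWeight
  split_ifs with hA hA'
  · have hinv : 1 / (1 - pjOf p D Sb) ≤ 2 := by
      rw [div_le_iff₀ (by linarith)]
      linarith
    calc 1 / ((D : ℝ) * (1 - pjOf p D Sb) * p.choose #A)
        = 1 / (1 - pjOf p D Sb) * (1 / ((D : ℝ) * p.choose #A)) := by
          rw [one_div_mul_one_div]; ring
      _ ≤ 2 * (1 / ((D : ℝ) * p.choose #A)) := by gcongr
  · exact absurd hA.2.1 hA'
  · positivity
  · simp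

lemma sum_hierUnifWeight_le_sum_pjOf (S : Finset (Fin p)) (k : ℕ) :
    ∑ A, (if k ≤ #(A ∩ S) then hierUnifWeight p D A else 0)
      ≤ ∑ T ∈ S.powersetCard k, pjOf p D T := by
  simp only [← sum_hierUnifWeight_superset_eq_pjOf]
  rw [sum_comm]
  refine sum_le_sum fun A _ => ?_
  have hnonneg : ∀ T ∈ S.powersetCard k, 0 ≤ if T ⊆ A then hierUnifWeight p D A else 0 :=
    fun _ _ => ite_nonneg (hierUnifWeight_nonneg A) le_rfl
  split_ifs with h
  · obtain ⟨T, hT, hTk⟩ := exists_subset_card_eq h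
    have hTmem : T ∈ S.powersetCard k := mem_powersetCard.2 ⟨hT.trans inter_subset_right, hTk⟩
    calc hierUnifWeight p D A = if T ⊆ A then hierUnifWeight p D A else 0 :=
          (if_pos (hT.trans inter_subset_left)).symm
      _ ≤ _ := single_le_sum hnonneg hTmem
  · exact sum_nonneg hnonneg

end HierarchicalUniform

section Binomial

lemma Nat.descFactorial_mul_pow_le {D p : ℕ} (h : D ≤ p) (k : ℕ) :
    D.descFactorial k * p ^ k ≤ p.descFactorial k * D ^ k := by
  induction k with
  | zero => simp
  | succ k ih =>
    have hstep : (D - k) * p ≤ (p - k) * D := by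
      rw [Nat.sub_mul, Nat.sub_mul, mul_comm D p]
      exact Nat.sub_le_sub_left (Nat.mul_le_mul_left k h) _
    calc D.descFactorial (k + 1) * p ^ (k + 1) = D.descFactorial k * p ^ k * ((D - k) * p) := by
          rw [Nat.descFactorial_succ, pow_succ]; ring
      _ ≤ p.descFactorial k * D ^ k * ((p - k) * D) := Nat.mul_le_mul ih hstep
      _ = p.descFactorial (k + 1) * D ^ (k + 1) := by
          rw [Nat.descFactorial_succ, pow_succ]; ring

lemma choose_div_choose_eq_descFactorial_div (D p k : ℕ) :
    (D.choose k : ℝ) / p.choose k = D.descFactorial k / p.descFactorial k := by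
  simp only [Nat.descFactorial_eq_factorial_mul_choose, Nat.cast_mul]
  rw [mul_div_mul_left _ _ (by positivity)]

lemma choose_div_choose_le_pow {D p k : ℕ} (hk : k ≤ p) (hp : 0 < p) (h : D ≤ p) :
    (D.choose k : ℝ) / p.choose k ≤ ((D : ℝ) / p) ^ k := by
  have hdesc : (0 : ℝ) < p.descFactorial k := by exact_mod_cast Nat.descFactorial_pos.2 hk
  rw [choose_div_choose_eq_descFactorial_div, div_pow, div_le_div_iff₀ hdesc (by positivity),
    mul_comm ((D : ℝ) ^ k)]
  exact_mod_cast Nat.descFactorial_mul_pow_le h k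

lemma pow_le_choose_div_choose {D p k : ℕ} (hk : k ≤ p) :
    (((D + 1 - k : ℕ) : ℝ) / p) ^ k ≤ (D.choose k : ℝ) / p.choose k := by
  have hdesc : (0 : ℝ) < p.descFactorial k := by exact_mod_cast Nat.descFactorial_pos.2 hk
  rw [choose_div_choose_eq_descFactorial_div, div_pow]
  exact div_le_div₀ (by positivity) (by exact_mod_cast Nat.pow_sub_le_descFactorial D k) hdesc
    (by exact_mod_cast Nat.descFactorial_le_pow p k)

end Binomial

section InclusionProbability

variable {p D : ℕ} {T : Finset (Fin p)}

lemma pjOf_eq (hT : #T ≤ D) (hDp : D ≤ p) :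
    pjOf p D T = (D + 1) / ((#T + 1) * D) * ((D.choose #T : ℝ) / p.choose #T) := by
  have hterm : ∀ d ∈ Icc #T D,
      ((p - #T).choose (d - #T) : ℝ) / p.choose d = (d.choose #T : ℝ) / p.choose #T := by
    intro d hd
    have hd := mem_Icc.1 hd
    have hpd : (0 : ℝ) < p.choose d := by exact_mod_cast Nat.choose_pos (hd.2.trans hDp)
    have hpT : (0 : ℝ) < p.choose #T := by exact_mod_cast Nat.choose_pos (hT.trans hDp)
    rw [div_eq_div_iff hpd.ne' hpT.ne']
    have := Nat.choose_mul (n := p) hd.1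
    norm_cast
    linarith
  have hsucc : ((D + 1).choose (#T + 1) : ℝ) * (#T + 1) = (D + 1) * D.choose #T := by
    exact_mod_cast (Nat.add_one_mul_choose_eq D #T).symm
  rw [pjOf, sum_congr rfl hterm, ← sum_div, ← Nat.cast_sum, Nat.sum_Icc_choose]
  field_simp
  rw [hsucc]

lemma pjOf_pos (hD : 0 < D) (hT : #T ≤ D) (hDp : D ≤ p) : 0 < pjOf p D T := by
  have hDT : (0 : ℝ) < D.choose #T := by exact_mod_cast Nat.choose_pos hT
  have hpT : (0 : ℝ) < p.choose #T := by exact_mod_cast Nat.choose_pos (hT.trans hDp)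
  rw [pjOf_eq hT hDp]
  positivity

lemma pjOf_le_two_mul_pow (hD : 0 < D) (hT : #T ≤ D) (hDp : D ≤ p) :
    pjOf p D T ≤ 2 * ((D : ℝ) / p) ^ #T := by
  have hD' : (1 : ℝ) ≤ D := by exact_mod_cast hD
  have hfactor : ((D : ℝ) + 1) / ((#T + 1) * D) ≤ 2 := by
    rw [div_le_iff₀ (by positivity)]
    nlinarith [(Nat.cast_nonneg #T : (0 : ℝ) ≤ #T)]
  rw [pjOf_eq hT hDp]
  gcongr
  exact choose_div_choose_le_pow (hT.trans hDp) (hD.trans_le hDp) hDp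

lemma pjOf_ge {K : ℕ} (hD : 0 < D) (hTK : #T ≤ K) (hKD : 2 * K ≤ D) (hDp : D ≤ p) :
    ((D : ℝ) / (2 * p)) ^ K / (K + 1) ≤ pjOf p D T := by
  have hT : #T ≤ D := by omega
  have hp : (0 : ℝ) < p := by exact_mod_cast hD.trans_le hDp
  have hD' : (1 : ℝ) ≤ D := by exact_mod_cast hD
  have hx1 : (D : ℝ) / (2 * p) ≤ 1 := by
    rw [div_le_one (by positivity)]
    linarith [(Nat.cast_le.2 hDp : (D : ℝ) ≤ p)]
  have hhalf : (D : ℝ) / 2 ≤ ((D + 1 - #T : ℕ) : ℝ) := by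
    rw [Nat.cast_sub (by omega)]
    push_cast
    have h2T : (2 : ℝ) * #T ≤ D := by exact_mod_cast (by omega : 2 * #T ≤ D)
    linarith
  calc ((D : ℝ) / (2 * p)) ^ K / (K + 1)
      ≤ ((D : ℝ) / (2 * p)) ^ #T / (#T + 1) := by
        exact div_le_div₀ (by positivity) (pow_le_pow_of_le_one (by positivity) hx1 hTK)
          (by positivity) (by exact_mod_cast Nat.add_le_add_right hTK 1)
    _ ≤ (((D + 1 - #T : ℕ) : ℝ) / p) ^ #T / (#T + 1) := by
        rw [← div_div]
        gcongr
    _ ≤ ((D.choose #T : ℝ) / p.choose #T) / (#T + 1) := by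
        gcongr
        exact pow_le_choose_div_choose (hT.trans hDp)
    _ ≤ pjOf p D T := by
        rw [pjOf_eq hT hDp, div_eq_inv_mul (_ / _), mul_comm ((_ : ℝ) + 1)]
        gcongr
        rw [inv_eq_one_div, div_le_div_iff₀ (by positivity) (by positivity)]
        nlinarith

end InclusionProbability

section Separation

variable {α : Type*} [DecidableEq α]

/-- The inequality of Assumption A for the variable `j` at level `d`. -/
def SeparatesAt (D : ℕ) (S : Finset α) (Cr : Finset α → ℝ) (ε : ℝ) (j : α) (d : ℕ) : Prop :=
  ∀ A A' : Finset α, #A ≤ D → #A' ≤ D → #(A ∩ S) < d → d ≤ #(A' ∩ S) → j ∈ A' → j ∉ A →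
    2 * ε < Cr A - Cr A'

/-- The set `S̄_j`, for `S = S*` and `S₀ = S*_{[0]}`. -/
def signalCover (S S₀ : Finset α) (j : α) : Finset α :=
  if j ∈ S₀ then (if h : (S \ S₀).Nonempty then insert h.choose S₀ else S₀)
  else insert j S₀

variable {S S₀ : Finset α} {j : α}

lemma mem_signalCover_self : j ∈ signalCover S S₀ j := by
  unfold signalCover
  split_ifs with hj
  · exact mem_insert_of_mem hj
  · exact hj
  · exact mem_insert_self j S₀

lemma subset_signalCover : S₀ ⊆ signalCover S S₀ j := by
  unfold signalCover
  split_ifs <;> first | exact subset_insert _ _ | exact Subset.rfl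

lemma card_signalCover_le : #(signalCover S S₀ j) ≤ #S₀ + 1 := by
  unfold signalCover
  split_ifs <;> first | exact card_insert_le _ _ | exact Nat.le_succ _

lemma signalCover_eq_insert_or_eq (hS₀ : S₀ ⊆ S) (hj : j ∈ S) :
    (∃ t ∈ S \ S₀, signalCover S S₀ j = insert t S₀) ∨ (signalCover S S₀ j = S₀ ∧ S₀ = S) := by
  unfold signalCover
  split_ifs with hjS₀ h
  · exact Or.inl ⟨h.choose, h.choose_spec, rfl⟩
  · exact Or.inr ⟨rfl, hS₀.antisymm fun x hx => by_contra fun hx₀ => h ⟨x, mem_sdiff.2 ⟨hx, hx₀⟩⟩⟩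
  · exact Or.inl ⟨j, mem_sdiff.2 ⟨hj, hjS₀⟩, rfl⟩

lemma signalCover_subset (hS₀ : S₀ ⊆ S) (hj : j ∈ S) : signalCover S S₀ j ⊆ S := by
  rcases signalCover_eq_insert_or_eq hS₀ hj with ⟨t, ht, h⟩ | ⟨h, rfl⟩
  · exact h ▸ insert_subset (mem_sdiff.1 ht).1 hS₀
  · exact h.le

lemma card_inter_of_not_signalCover_subset (hS₀ : S₀ ⊆ S) (hj : j ∈ S) {A : Finset α}
    (hA : ¬signalCover S S₀ j ⊆ A) (hcard : #(signalCover S S₀ j) ≤ #(A ∩ S)) :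
    #S₀ + 1 ≤ #(A ∩ S) := by
  rcases signalCover_eq_insert_or_eq hS₀ hj with ⟨t, ht, h⟩ | ⟨h, rfl⟩
  · rwa [h, card_insert_of_notMem (mem_sdiff.1 ht).2] at hcard
  · rw [h] at hA hcard
    exact absurd ((eq_of_subset_of_card_le inter_subset_right hcard) ▸ inter_subset_left) hA

end Separation

section Vanishing

variable {p D B₂ : ℕ} {Cr : Finset (Fin p) → ℝ} {ε : ℝ} {S Sb : Finset (Fin p)}

lemma deltaJ_eq_zero (hSb : Sb ⊆ S) (hsep : ∀ i ∈ Sb, SeparatesAt D S Cr ε i #Sb)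
    {A : Finset (Fin p)} (hA : #A ≤ D) (hSbA : ¬Sb ⊆ A) (hAS : #(A ∩ S) < #Sb) :
    deltaJ p D Cr ε Sb A = 0 := by
  obtain ⟨i, hiSb, hiA⟩ := not_subset.1 hSbA
  refine sum_eq_zero fun A' _ => ?_
  unfold lawJ
  split_ifs with hA' hlt
  · exact absurd hlt (hsep i hiSb A A' hA hA'.2 hAS
      (card_le_card (subset_inter hA'.1 hSb)) (hA'.1 hiSb) hiA).le.not_gt
  all_goals simp

lemma ETerm_le_sum_lawNotJ (hSb : Sb ⊆ S) (hsep : ∀ i ∈ Sb, SeparatesAt D S Cr ε i #Sb)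
    (hB₂ : 0 < B₂) (hpj : 0 < pjOf p D Sb) (hpj₁ : pjOf p D Sb ≤ 1) :
    ETerm p D B₂ Cr ε Sb
      ≤ ∑ A, if ¬Sb ⊆ A ∧ #Sb ≤ #(A ∩ S) then lawNotJ p D Sb A else 0 := by
  have hexp : 0 < (B₂ : ℝ) * pjOf p D Sb / 2 := by positivity
  refine sum_le_sum fun A _ => ?_
  split_ifs with h
  · exact mul_le_of_le_one_right (lawNotJ_nonneg hpj₁ A)
      (Real.rpow_le_one (deltaJ_nonneg Cr ε Sb A) (deltaJ_le_one Cr ε hpj.ne' A) hexp.le)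
  · by_cases hA : #A ≤ D ∧ ¬Sb ⊆ A
    · rw [deltaJ_eq_zero hSb hsep hA.1 hA.2 (not_le.1 fun h' => h ⟨hA.2, h'⟩),
        Real.zero_rpow hexp.ne', mul_zero]
    · have hlaw : lawNotJ p D Sb A = 0 := if_neg fun h' => hA ⟨h'.2.1, h'.2.2⟩
      rw [hlaw, zero_mul]

lemma sum_lawNotJ_le (hpj : pjOf p D Sb ≤ 1 / 2) (S : Finset (Fin p)) (k : ℕ) :
    ∑ A, (if k ≤ #(A ∩ S) then lawNotJ p D Sb A else 0)
      ≤ 2 * ∑ T ∈ S.powersetCard k, pjOf p D T := by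
  calc ∑ A, (if k ≤ #(A ∩ S) then lawNotJ p D Sb A else 0)
      ≤ ∑ A, 2 * (if k ≤ #(A ∩ S) then hierUnifWeight p D A else 0) :=
        sum_le_sum fun A _ => by split_ifs <;> simp [lawNotJ_le hpj A]
    _ ≤ 2 * ∑ T ∈ S.powersetCard k, pjOf p D T := by
        rw [← mul_sum]
        gcongr
        exact sum_hierUnifWeight_le_sum_pjOf S k

end Vanishing

section Cover

variable {p D B₂ : ℕ} {Cr : Finset (Fin p) → ℝ} {ε : ℝ} {S S₀ : Finset (Fin p)} {j : Fin p}

lemma ETerm_signalCover_le (hS₀ : S₀ ⊆ S) (hj : j ∈ S)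
    (h₀ : ∀ i ∈ S₀, ∀ d, 1 ≤ d → SeparatesAt D S Cr ε i d)
    (h₁ : ∀ i ∈ S \ S₀, ∀ d, #S₀ + 1 ≤ d → SeparatesAt D S Cr ε i d)
    (hB₂ : 0 < B₂) (hD : #S₀ + 1 ≤ D) (hDp : D ≤ p) (hsmall : (D : ℝ) / p ≤ 1 / 4) :
    ETerm p D B₂ Cr ε (signalCover S S₀ j)
      ≤ 4 * (#S).choose (#S₀ + 1) * ((D : ℝ) / p) ^ (#S₀ + 1) := by
  set Sb := signalCover S S₀ j
  have hSbS : Sb ⊆ S := signalCover_subset hS₀ hj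
  have hSb_pos : 0 < #Sb := card_pos.2 ⟨j, mem_signalCover_self⟩
  have hSbD : #Sb ≤ D := card_signalCover_le.trans hD
  have hsep : ∀ i ∈ Sb, SeparatesAt D S Cr ε i #Sb := by
    intro i hi
    by_cases hi₀ : i ∈ S₀
    · exact h₀ i hi₀ _ hSb_pos
    · exact h₁ i (mem_sdiff.2 ⟨hSbS hi, hi₀⟩) _
        (card_lt_card (subset_signalCover.ssubset_of_not_subset fun h => hi₀ (h hi)))
  have hpj : pjOf p D Sb ≤ 1 / 2 :=
    calc pjOf p D Sb ≤ 2 * ((D : ℝ) / p) ^ #Sb := pjOf_le_two_mul_pow (by omega) hSbD hDp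
      _ ≤ 2 * ((D : ℝ) / p) := by
          gcongr
          exact pow_le_of_le_one (by positivity) (by linarith) hSb_pos.ne'
      _ ≤ 1 / 2 := by linarith
  calc ETerm p D B₂ Cr ε Sb
      ≤ ∑ A, if ¬Sb ⊆ A ∧ #Sb ≤ #(A ∩ S) then lawNotJ p D Sb A else 0 :=
        ETerm_le_sum_lawNotJ hSbS hsep hB₂ (pjOf_pos (by omega) hSbD hDp) (by linarith)
    _ ≤ ∑ A, if #S₀ + 1 ≤ #(A ∩ S) then lawNotJ p D Sb A else 0 := by
        refine sum_le_sum fun A _ => ?_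
        split_ifs with h h'
        · exact le_rfl
        · exact absurd (card_inter_of_not_signalCover_subset hS₀ hj h.1 h.2) h'
        · exact lawNotJ_nonneg (by linarith) A
        · exact le_rfl
    _ ≤ 2 * ∑ T ∈ S.powersetCard (#S₀ + 1), pjOf p D T := sum_lawNotJ_le hpj S _
    _ ≤ 2 * ∑ T ∈ S.powersetCard (#S₀ + 1), 2 * ((D : ℝ) / p) ^ (#S₀ + 1) := by
        gcongr with T hT
        rw [← (mem_powersetCard.1 hT).2]
        exact pjOf_le_two_mul_pow (by omega) ((mem_powersetCard.1 hT).2 ▸ hD) hDp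
    _ = 4 * (#S).choose (#S₀ + 1) * ((D : ℝ) / p) ^ (#S₀ + 1) := by
        rw [sum_const, card_powersetCard, nsmul_eq_mul]
        ring

lemma mul_ETerm_signalCover_le {C : ℝ} (hS₀ : S₀ ⊆ S) (hj : j ∈ S)
    (h₀ : ∀ i ∈ S₀, ∀ d, 1 ≤ d → SeparatesAt D S Cr ε i d)
    (h₁ : ∀ i ∈ S \ S₀, ∀ d, #S₀ + 1 ≤ d → SeparatesAt D S Cr ε i d)
    (hB₂ : 0 < B₂) (hB₂C : (B₂ : ℝ) ≤ C * ((p : ℝ) / D) ^ (#S₀ + 1))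
    (hD : #S₀ + 1 ≤ D) (hDp : D ≤ p) (hsmall : (D : ℝ) / p ≤ 1 / 4) :
    B₂ * ETerm p D B₂ Cr ε (signalCover S S₀ j) ≤ 4 * C * (#S).choose (#S₀ + 1) := by
  have hD₀ : (0 : ℝ) < D := by exact_mod_cast (by omega : 0 < D)
  have hp₀ : (0 : ℝ) < p := hD₀.trans_le (by exact_mod_cast hDp)
  calc (B₂ : ℝ) * ETerm p D B₂ Cr ε (signalCover S S₀ j)
      ≤ B₂ * (4 * (#S).choose (#S₀ + 1) * ((D : ℝ) / p) ^ (#S₀ + 1)) :=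
        mul_le_mul_of_nonneg_left (ETerm_signalCover_le hS₀ hj h₀ h₁ hB₂ hD hDp hsmall)
          (Nat.cast_nonneg B₂)
    _ ≤ C * ((p : ℝ) / D) ^ (#S₀ + 1) * (4 * (#S).choose (#S₀ + 1) * ((D : ℝ) / p) ^ (#S₀ + 1)) :=
        mul_le_mul_of_nonneg_right hB₂C (by positivity)
    _ = 4 * C * (#S).choose (#S₀ + 1) * ((p : ℝ) / D * ((D : ℝ) / p)) ^ (#S₀ + 1) := by ring
    _ = 4 * C * (#S).choose (#S₀ + 1) := by
        rw [div_mul_div_comm, mul_comm (p : ℝ), div_self (by positivity), one_pow, mul_one]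

lemma le_mul_pjOf_signalCover {B c : ℝ} (hc : 0 < c) (hcB : c * ((p : ℝ) / D) ^ (#S₀ + 1) ≤ B)
    (hD : 2 * (#S₀ + 1) ≤ D) (hDp : D ≤ p) :
    c / (2 ^ (#S₀ + 1) * (#S₀ + 2)) ≤ B * pjOf p D (signalCover S S₀ j) := by
  have hD₀ : (0 : ℝ) < D := by exact_mod_cast (by omega : 0 < D)
  have hp₀ : (0 : ℝ) < p := hD₀.trans_le (by exact_mod_cast hDp)
  have hB : 0 ≤ B := le_trans (by positivity) hcB
  calc c / (2 ^ (#S₀ + 1) * (#S₀ + 2))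
      = c * ((p : ℝ) / D) ^ (#S₀ + 1) * (((D : ℝ) / (2 * p)) ^ (#S₀ + 1) / ((#S₀ + 1 : ℕ) + 1)) := by
        rw [mul_div_assoc', mul_assoc c, ← mul_pow,
          show (p : ℝ) / D * (D / (2 * p)) = 1 / 2 by field_simp, one_div_pow]
        push_cast
        field_simp
        ring
    _ ≤ B * pjOf p D (signalCover S S₀ j) :=
        mul_le_mul hcB (pjOf_ge (by omega) card_signalCover_le hD hDp) (by positivity) hB

end Cover

theorem stmt_18_general (p D B₂ : ℕ → ℕ) (pstar s0 : ℕ) (hpstar : 1 ≤ pstar)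
    (hD : ∀ n, 1 ≤ D n) (hDp : ∀ n, D n ≤ p n)
    (hDtop : Tendsto D atTop atTop)
    (hDp0 : Tendsto (fun n => (D n : ℝ) / (p n : ℝ)) atTop (nhds 0))
    -- `B₂ ≍ (p/D)^{|S*_{[0]}|+1}`
    (hB₂ : ∃ c C : ℝ, 0 < c ∧ c ≤ C ∧ ∀ n,
      c * ((p n : ℝ) / (D n : ℝ)) ^ (s0 + 1) ≤ (B₂ n : ℝ) ∧
      (B₂ n : ℝ) ≤ C * ((p n : ℝ) / (D n : ℝ)) ^ (s0 + 1))
    -- the signal set and its decomposition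
    (Sstar S0 S1 : ∀ n, Finset (Fin (p n)))
    (hScard : ∀ n, (Sstar n).card = pstar)
    (hS0card : ∀ n, (S0 n).card = s0)
    (hdecomp : ∀ n, Sstar n = S0 n ∪ S1 n)
    (Cr : ∀ n, Finset (Fin (p n)) → ℝ) (εn : ℕ → ℝ)
    -- Assumption A (a)
    (hA0 : ∀ n, ∀ j ∈ S0 n, ∀ d : ℕ, 1 ≤ d →
      ∀ S S' : Finset (Fin (p n)), S.card ≤ D n → S'.card ≤ D n →
        (S ∩ Sstar n).card < d → d ≤ (S' ∩ Sstar n).card → j ∈ S' → j ∉ S →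
        2 * εn n < Cr n S - Cr n S')
    -- Assumption A (b)
    (hA1 : ∀ n, ∀ j ∈ S1 n, ∀ d : ℕ, s0 + 1 ≤ d →
      ∀ S S' : Finset (Fin (p n)), S.card ≤ D n → S'.card ≤ D n →
        (S ∩ Sstar n).card < d → d ≤ (S' ∩ Sstar n).card → j ∈ S' → j ∉ S →
        2 * εn n < Cr n S - Cr n S') :
    ∃ Sbar : ∀ n, Fin (p n) → Finset (Fin (p n)),
      (∀ n, ∀ j ∈ Sstar n, j ∈ Sbar n j ∧ (Sbar n j).card ≤ D n)
      ∧ (∃ c : ℝ, 0 < c ∧ ∀ᶠ n in atTop,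
          c ≤ (B₂ n : ℝ) * ⨅ j : {j // j ∈ Sstar n}, pjOf (p n) (D n) (Sbar n j.1))
      ∧ (∃ M : ℝ, ∀ᶠ n in atTop,
          (B₂ n : ℝ) *
            ⨆ j : {j // j ∈ Sstar n}, ETerm (p n) (D n) (B₂ n) (Cr n) (εn n) (Sbar n j.1)
          ≤ M) := by
  obtain ⟨c, C, hc, hcC, hB₂⟩ := hB₂
  have hC : 0 < C := hc.trans_le hcC
  have hS0 : ∀ n, S0 n ⊆ Sstar n := fun n => hdecomp n ▸ subset_union_left
  have hA1' : ∀ n, ∀ i ∈ Sstar n \ S0 n, ∀ d, (S0 n).card + 1 ≤ d →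
      SeparatesAt (D n) (Sstar n) (Cr n) (εn n) i d := fun n i hi => by
    obtain ⟨hi, hi₀⟩ := mem_sdiff.1 hi
    rw [hS0card]
    exact hA1 n i ((mem_union.1 (hdecomp n ▸ hi)).resolve_left hi₀)
  have hB₂pos : ∀ n, (0 : ℝ) < B₂ n := fun n => by
    have hD₀ : (0 : ℝ) < D n := by exact_mod_cast hD n
    have hp₀ : (0 : ℝ) < p n := hD₀.trans_le (by exact_mod_cast hDp n)
    exact (mul_pos hc (by positivity)).trans_le (hB₂ n).1
  refine ⟨fun n j => if 2 * (s0 + 1) ≤ D n then signalCover (Sstar n) (S0 n) j else {j},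
    fun n j _ => ?_, ⟨c / (2 ^ (s0 + 1) * (s0 + 2)), by positivity, ?_⟩,
    ⟨4 * C * pstar.choose (s0 + 1), ?_⟩⟩
  · dsimp only
    split_ifs with hn
    · exact ⟨mem_signalCover_self, card_signalCover_le.trans (by rw [hS0card]; omega)⟩
    · exact ⟨mem_singleton_self j, (card_singleton j).trans_le (hD n)⟩
  · filter_upwards [hDtop.eventually_ge_atTop (2 * (s0 + 1))] with n hn
    obtain ⟨j₀, hj₀⟩ := card_pos.1 ((hScard n).symm ▸ hpstar : 0 < (Sstar n).card)
    have : Nonempty {j // j ∈ Sstar n} := ⟨⟨j₀, hj₀⟩⟩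
    rw [Real.mul_iInf_of_nonneg (hB₂pos n).le]
    refine le_ciInf fun j => ?_
    simp only [if_pos hn]
    have h := le_mul_pjOf_signalCover (S := Sstar n) (j := j.1) (B := B₂ n) hc
      (by rw [hS0card]; exact (hB₂ n).1) (by rwa [hS0card]) (hDp n)
    rwa [hS0card] at h
  · filter_upwards [hDtop.eventually_ge_atTop (2 * (s0 + 1)),
      hDp0.eventually_le_const (by norm_num : (0 : ℝ) < 1 / 4)] with n hn hsmall
    rw [Real.mul_iSup_of_nonneg (hB₂pos n).le]
    refine Real.iSup_le (fun j => ?_) (by positivity)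
    simp only [if_pos hn]
    have h := mul_ETerm_signalCover_le (hS0 n) j.2 (hA0 n) (hA1' n) (by exact_mod_cast hB₂pos n)
      (by rw [hS0card]; exact (hB₂ n).2) (by rw [hS0card]; omega) (hDp n) hsmall
    rwa [hScard, hS0card] at h

/-- Proposition A.1(i): under Assumption A for the decomposition
`S* = S*_{[0]} ∪ S*_{[1]}`, whenever `B₂ ≍ (p/D)^{|S*_{[0]}|+1}`, Assumption 1 holds. -/
theorem stmt_18 (p D B₂ : ℕ → ℕ) (pstar s0 s1 : ℕ) (hpstar : 1 ≤ pstar)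
    (hD : ∀ n, 1 ≤ D n) (hDp : ∀ n, D n ≤ p n)
    (hDtop : Tendsto D atTop atTop)
    (hDp0 : Tendsto (fun n => (D n : ℝ) / (p n : ℝ)) atTop (nhds 0))
    (hB₂pos : ∀ n, 1 ≤ B₂ n)
    -- `B₂ ≍ (p/D)^{|S*_{[0]}|+1}`
    (hB₂ : ∃ c C : ℝ, 0 < c ∧ c ≤ C ∧ ∀ n,
      c * ((p n : ℝ) / (D n : ℝ)) ^ (s0 + 1) ≤ (B₂ n : ℝ) ∧
      (B₂ n : ℝ) ≤ C * ((p n : ℝ) / (D n : ℝ)) ^ (s0 + 1))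
    -- the signal set and its decomposition
    (Sstar S0 S1 : ∀ n, Finset (Fin (p n)))
    (hScard : ∀ n, (Sstar n).card = pstar)
    (hS0card : ∀ n, (S0 n).card = s0) (hS1card : ∀ n, (S1 n).card = s1)
    (hdecomp : ∀ n, Sstar n = S0 n ∪ S1 n)
    (Cr : ∀ n, Finset (Fin (p n)) → ℝ) (εn : ℕ → ℝ) (hεn : ∀ n, 0 ≤ εn n)
    -- Assumption A (a)
    (hA0 : ∀ n, ∀ j ∈ S0 n, ∀ d : ℕ, 1 ≤ d →
      ∀ S S' : Finset (Fin (p n)), S.card ≤ D n → S'.card ≤ D n →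
        (S ∩ Sstar n).card < d → d ≤ (S' ∩ Sstar n).card → j ∈ S' → j ∉ S →
        2 * εn n < Cr n S - Cr n S')
    -- Assumption A (b)
    (hA1 : ∀ n, ∀ j ∈ S1 n, ∀ d : ℕ, s0 + 1 ≤ d →
      ∀ S S' : Finset (Fin (p n)), S.card ≤ D n → S'.card ≤ D n →
        (S ∩ Sstar n).card < d → d ≤ (S' ∩ Sstar n).card → j ∈ S' → j ∉ S →
        2 * εn n < Cr n S - Cr n S') :
    ∃ Sbar : ∀ n, Fin (p n) → Finset (Fin (p n)),
      (∀ n, ∀ j ∈ Sstar n, j ∈ Sbar n j ∧ (Sbar n j).card ≤ D n)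
      ∧ (∃ c : ℝ, 0 < c ∧ ∀ᶠ n in atTop,
          c ≤ (B₂ n : ℝ) * ⨅ j : {j // j ∈ Sstar n}, pjOf (p n) (D n) (Sbar n j.1))
      ∧ (∃ M : ℝ, ∀ᶠ n in atTop,
          (B₂ n : ℝ) *
            ⨆ j : {j // j ∈ Sstar n}, ETerm (p n) (D n) (B₂ n) (Cr n) (εn n) (Sbar n j.1)
          ≤ M) :=
  stmt_18_general p D B₂ pstar s0 hpstar hD hDp hDtop hDp0 hB₂ Sstar S0 S1 hScard hS0card hdecomp Cr
    εn hA0 hA1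

end
end
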